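/- arXiv:1602.06773 — 6 statements merged into one kernel-verified Lean document; each statement's English description precedes it below -/
import Mathlib

section
/- Let V be a finite-dimensional vector space over a field k and let U and U' be two subspaces of V. Then there exists a basis B of V that is simultaneously compatible with U and with U', i.e. B ∩ U is a basis of U and B ∩ U' is a basis of U'. -/
/-!
Choose a linearly independent set `s₀` spanning `U ⊓ U'` and extend it to bases `s` of `U` and
`t` of `U'`. Since `span (t \ s₀)` meets `span s₀ = U ⊓ U'` only in `0`, it meets `U` only in `0`,
so `s ∪ t` is linearly independent. Any basis `B ⊇ s ∪ t` of `V` then satisfies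
`s ⊆ B ∩ U ⊆ U` and `t ⊆ B ∩ U' ⊆ U'`.
-/

open Submodule Set

theorem LinearIndepOn.id_union_of_inf_span_le {R M : Type*} [Ring R] [AddCommGroup M]
    [Module R M] {s t u : Set M} (hs : LinearIndepOn R id s) (ht : LinearIndepOn R id t)
    (hus : u ⊆ s) (hut : u ⊆ t) (hspan : span R s ⊓ span R t ≤ span R u) :
    LinearIndepOn R id (s ∪ t) := by
  have hdisj_u : Disjoint (span R (t \ u)) (span R u) := by
    rw [← sdiff_union_of_subset hut] at ht
    exact ((linearIndepOn_id_union_iff disjoint_sdiff_left).1 ht).2.2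
  have hdisj_s : Disjoint (span R s) (span R (t \ u)) := by
    rw [Submodule.disjoint_def]
    intro x hxs hxtu
    have hxt : x ∈ span R t := span_mono sdiff_subset hxtu
    exact Submodule.disjoint_def.1 hdisj_u x hxtu (hspan ⟨hxs, hxt⟩)
  have hunion : s ∪ (t \ u) = s ∪ t := by
    ext x
    by_cases hx : x ∈ u
    · simp [hx, hus hx]
    · simp [hx]
  rw [← hunion]
  exact hs.id_union (ht.mono sdiff_subset) hdisj_s

theorem exists_linearIndepOn_id_extension_span_eq {K V : Type*} [DivisionRing K] [AddCommGroup V]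
    [Module K V] {s : Set V} {W : Submodule K V} (hs : LinearIndepOn K id s) (hsW : s ⊆ W) :
    ∃ b, s ⊆ b ∧ span K b = W ∧ LinearIndepOn K id b := by
  obtain ⟨b, hbW, hsb, hWb, hb⟩ := exists_linearIndepOn_id_extension hs hsW
  exact ⟨b, hsb, le_antisymm (span_le.2 hbW) (by simpa using span_mono (R := K) hWb), hb⟩

theorem Submodule.span_inter_eq_of_subset {R M : Type*} [Semiring R] [AddCommMonoid M]
    [Module R M] {s B : Set M} {W : Submodule R M} (hsB : s ⊆ B) (hs : span R s = W) :
    span R (B ∩ W) = W :=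
  le_antisymm (span_le.2 inter_subset_right)
    (hs ▸ span_mono (subset_inter hsB (hs ▸ (subset_span : s ⊆ span R s))))

theorem stmt0_general (k : Type) [Field k] (V : Type) [AddCommGroup V] [Module k V]
    (U U' : Submodule k V) :
    ∃ B : Set V, LinearIndependent k (Subtype.val : B → V) ∧
      Submodule.span k B = ⊤ ∧
      Submodule.span k (B ∩ (U : Set V)) = U ∧
      Submodule.span k (B ∩ (U' : Set V)) = U' := by
  obtain ⟨s₀, hs₀UU', hs₀, hs₀li⟩ := exists_linearIndependent k ((U ⊓ U' : Submodule k V) : Set V)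
  rw [span_eq] at hs₀
  obtain ⟨s, hs₀s, hs, hsli⟩ :=
    exists_linearIndepOn_id_extension_span_eq hs₀li (hs₀UU'.trans fun _ hx ↦ hx.1)
  obtain ⟨t, hs₀t, ht, htli⟩ :=
    exists_linearIndepOn_id_extension_span_eq hs₀li (hs₀UU'.trans fun _ hx ↦ hx.2)
  have hst : LinearIndepOn k id (s ∪ t) :=
    hsli.id_union_of_inf_span_le htli hs₀s hs₀t (by rw [hs, ht, hs₀])
  obtain ⟨B, hstB, hB, hBli⟩ :=
    exists_linearIndepOn_id_extension_span_eq hst (W := ⊤) (subset_univ _)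
  exact ⟨B, hBli, hB, span_inter_eq_of_subset (subset_union_left.trans hstB) hs,
    span_inter_eq_of_subset (subset_union_right.trans hstB) ht⟩

/-- For a finite-dimensional vector space `V` over a field `k` and two
subspaces `U`, `U'`, there is a basis `B` of `V` compatible with both `U` and `U'`:
`B ∩ U` is a basis of `U` and `B ∩ U'` is a basis of `U'`. -/
theorem stmt0 (k : Type) [Field k] (V : Type) [AddCommGroup V] [Module k V]
    [FiniteDimensional k V] (U U' : Submodule k V) :
    ∃ B : Set V, LinearIndependent k (Subtype.val : B → V) ∧
      Submodule.span k B = ⊤ ∧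
      Submodule.span k (B ∩ (U : Set V)) = U ∧
      Submodule.span k (B ∩ (U' : Set V)) = U' :=
  stmt0_general k V U U'
end

section
/- Let V be a finite-dimensional vector space with two filtrations 0 = U_0 ⊆ ... ⊆ U_{n+1} = V and 0 = U'_0 ⊆ ... ⊆ U'_{m+1} = V. For each pair (i,j) with 1 ≤ i ≤ n+1 and 1 ≤ j ≤ m+1, choose a subspace C(i,j) of U_i ∩ U'_j such that ((U_i ∩ U'_{j-1}) + (U_{i-1} ∩ U'_j)) ⊕ C(i,j) = U_i ∩ U'_j (internal direct sum). Then V is the internal direct sum of the subspaces C(i,j) over all such pairs (i,j). -/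
/-!
The subspaces `C i j` together span `V`: by induction over the grid, each `U_i ∩ U'_j` is the sum
of `U_i ∩ U'_{j-1}`, `U_{i-1} ∩ U'_j` and `C i j`. Since `U_i ∩ U'_{j-1}` and `U_{i-1} ∩ U'_j`
meet in `U_{i-1} ∩ U'_{j-1}`, the dimension of `C i j` is the mixed second difference of
`d i j = dim (U_i ∩ U'_j)`, so the dimensions of the `C i j` telescope to `dim V`. A spanning
family whose dimensions add up to `dim V` is independent.
-/

open Module

lemma Fin.sum_univ_succ_sub_castSucc {M : Type*} [AddCommGroup M] {n : ℕ}
    (f : Fin (n + 1) → M) :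
    ∑ i : Fin n, (f i.succ - f i.castSucc) = f (Fin.last n) - f 0 := by
  induction n with
  | zero => simp
  | succ n ih =>
    rw [Fin.sum_univ_castSucc]
    simp only [Fin.succ_castSucc]
    rw [ih (fun i => f i.castSucc)]
    simp only [Fin.succ_last, Fin.castSucc_zero]
    abel

lemma Fin.sum_sum_second_difference {G : Type*} [AddCommGroup G] {N M : ℕ}
    (d : Fin (N + 1) → Fin (M + 1) → G) :
    ∑ i : Fin N, ∑ j : Fin M,
        ((d i.succ j.succ - d i.castSucc j.succ) - (d i.succ j.castSucc - d i.castSucc j.castSucc))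
      = (d (Fin.last N) (Fin.last M) - d 0 (Fin.last M)) - (d (Fin.last N) 0 - d 0 0) := by
  simp_rw [fun i : Fin N => Fin.sum_univ_succ_sub_castSucc (fun j => d i.succ j - d i.castSucc j)]
  rw [Finset.sum_sub_distrib, Fin.sum_univ_succ_sub_castSucc (fun i => d i (Fin.last M)),
    Fin.sum_univ_succ_sub_castSucc (fun i => d i 0)]

lemma Fin.le_iSup_of_le_sup_sup {α : Type*} [CompleteLattice α] {N M : ℕ}
    (W : Fin (N + 1) → Fin (M + 1) → α) (C : Fin N → Fin M → α)
    (hW_left : ∀ j, W 0 j = ⊥) (hW_bottom : ∀ i, W i 0 = ⊥)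
    (hW_succ : ∀ i j, W i.succ j.succ ≤ W i.succ j.castSucc ⊔ W i.castSucc j.succ ⊔ C i j)
    (i : Fin (N + 1)) (j : Fin (M + 1)) :
    W i j ≤ ⨆ p : Fin N × Fin M, C p.1 p.2 := by
  induction i using Fin.induction generalizing j with
  | zero => simp [hW_left]
  | succ i ih_i =>
    induction j using Fin.induction with
    | zero => simp [hW_bottom]
    | succ j ih_j =>
      refine (hW_succ i j).trans (sup_le (sup_le ih_j (ih_i j.succ)) ?_)
      exact le_iSup (fun p : Fin N × Fin M => C p.1 p.2) (i, j)

lemma inf_inf_inf_eq_of_le {α : Type*} [SemilatticeInf α] {a a' b b' : α}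
    (ha : a ≤ a') (hb : b ≤ b') : a' ⊓ b ⊓ (a ⊓ b') = a ⊓ b := by
  rw [inf_inf_inf_comm, inf_eq_right.2 ha, inf_eq_left.2 hb]

section FiniteDimensional

variable {K V : Type*} [DivisionRing K] [AddCommGroup V] [Module K V] [FiniteDimensional K V]

lemma Submodule.finrank_sup_eq_int (A B : Submodule K V) :
    (finrank K ↥(A ⊔ B) : ℤ) = finrank K A + finrank K B - finrank K ↥(A ⊓ B) := by
  have := Submodule.finrank_sup_add_finrank_inf_eq A B
  omega

lemma Submodule.finrank_eq_sub_of_disjoint_of_sup_eq {A C W : Submodule K V}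
    (hdisj : Disjoint A C) (hsup : A ⊔ C = W) :
    (finrank K C : ℤ) = finrank K W - finrank K A := by
  rw [← hsup, Submodule.finrank_sup_eq_int, hdisj.eq_bot, finrank_bot]
  ring

lemma DirectSum.isInternal_of_iSup_eq_top_of_sum_finrank_eq {ι : Type*} [Fintype ι]
    [DecidableEq ι] (A : ι → Submodule K V) (hsup : iSup A = ⊤)
    (hrank : ∑ i, finrank K (A i) = finrank K V) : DirectSum.IsInternal A := by
  have hsurj : Function.Surjective (DirectSum.coeLinearMap A) := by
    rw [← LinearMap.range_eq_top, DirectSum.range_coeLinearMap, hsup]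
  have hdim : finrank K (DirectSum ι fun i => A i) = finrank K V := by
    rw [Module.finrank_directSum, hrank]
  exact ⟨(LinearMap.injective_iff_surjective_of_finrank_eq_finrank hdim).2 hsurj, hsurj⟩

end FiniteDimensional

lemma Submodule.finrank_complement_eq_second_difference {K V : Type*} [DivisionRing K]
    [AddCommGroup V] [Module K V] [FiniteDimensional K V] {ι κ : Type*} [Preorder ι]
    [Preorder κ] {U : ι → Submodule K V} {U' : κ → Submodule K V} (hU : Monotone U)
    (hU' : Monotone U') {i i' : ι} {j j' : κ} (hi : i ≤ i') (hj : j ≤ j') {C : Submodule K V}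
    (hdisj : Disjoint ((U i' ⊓ U' j) ⊔ (U i ⊓ U' j')) C)
    (hsum : (U i' ⊓ U' j) ⊔ (U i ⊓ U' j') ⊔ C = U i' ⊓ U' j') :
    (finrank K C : ℤ) = (finrank K ↥(U i' ⊓ U' j') - finrank K ↥(U i ⊓ U' j'))
      - (finrank K ↥(U i' ⊓ U' j) - finrank K ↥(U i ⊓ U' j)) := by
  rw [Submodule.finrank_eq_sub_of_disjoint_of_sup_eq hdisj hsum, Submodule.finrank_sup_eq_int,
    inf_inf_inf_eq_of_le (hU hi) (hU' hj)]
  ring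

/-- Given two filtrations of a finite-dimensional vector space `V`
(indexed so that the paper's `U_i`, `1 ≤ i ≤ n+1`, is `U i.succ` for `i : Fin (n+1)`,
and `U_{i-1}` is `U i.castSucc`), and subspaces `C i j` with
`((U_i ∩ U'_{j-1}) + (U_{i-1} ∩ U'_j)) ⊕ C i j = U_i ∩ U'_j` (internally),
then `V` is the internal direct sum of the `C i j`. -/
theorem stmt2 (k : Type) [Field k] (V : Type) [AddCommGroup V] [Module k V]
    [FiniteDimensional k V] (n m : ℕ)
    (U : Fin (n + 2) → Submodule k V) (U' : Fin (m + 2) → Submodule k V)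
    (hU : Monotone U) (hU' : Monotone U')
    (hU0 : U 0 = ⊥) (hUtop : U (Fin.last (n + 1)) = ⊤)
    (hU'0 : U' 0 = ⊥) (hU'top : U' (Fin.last (m + 1)) = ⊤)
    (C : Fin (n + 1) → Fin (m + 1) → Submodule k V)
    (hdisj : ∀ i j,
      Disjoint ((U i.succ ⊓ U' j.castSucc) ⊔ (U i.castSucc ⊓ U' j.succ)) (C i j))
    (hsum : ∀ i j,
      ((U i.succ ⊓ U' j.castSucc) ⊔ (U i.castSucc ⊓ U' j.succ)) ⊔ C i j
        = U i.succ ⊓ U' j.succ) :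
    DirectSum.IsInternal (fun p : Fin (n + 1) × Fin (m + 1) => C p.1 p.2) := by
  classical
  have hspan : (⨆ p : Fin (n + 1) × Fin (m + 1), C p.1 p.2) = ⊤ := by
    have := Fin.le_iSup_of_le_sup_sup (fun i j => U i ⊓ U' j) C (by simp [hU0]) (by simp [hU'0])
      (fun i j => (hsum i j).ge) (Fin.last _) (Fin.last _)
    simpa [hUtop, hU'top] using this
  refine DirectSum.isInternal_of_iSup_eq_top_of_sum_finrank_eq _ hspan ?_
  have hrank := fun i j => Submodule.finrank_complement_eq_second_difference hU hU'
    (Fin.castSucc_le_succ i) (Fin.castSucc_le_succ j) (hdisj i j) (hsum i j)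
  zify
  rw [Fintype.sum_prod_type' (fun i j => (finrank k (C i j) : ℤ))]
  simp_rw [hrank]
  rw [Fin.sum_sum_second_difference (fun i j => (finrank k ↥(U i ⊓ U' j) : ℤ))]
  rw [hUtop, hU'top, hU0, hU'0, inf_top_eq, bot_inf_eq, inf_bot_eq, inf_bot_eq, finrank_top, finrank_bot]
  ring
end

section
/- For a finite tree quiver Q, the assignment Q' ↦ M(Q') gives a bijection between the set of connected subquivers Q' of Q and the set of isomorphism classes of thin indecomposable representations of Q. -/
/-! The support of a thin indecomposable representation `N` is connected and every arrow inside
it acts by a nonzero map: otherwise a set of vertices closed under the nonzero arrows (a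
connected component of the support, or one side of an edge of the tree, which is a bridge)
would split `N` as a direct sum. With spanning vectors at the vertices, the arrows inside the
support then act by nonzero scalars; on a tree these form a coboundary, and rescaling by it
identifies `N` with `M(support N)`. Conversely, the arrows of `M(S)` inside `S` are bijective,
so in a decomposition `M(S) ≅ N₁ ⊕ N₂` the support of `N₁` is a union of components of `S`, and
thinness keeps the supports of `N₁` and `N₂` disjoint. -/

/-! A minimal framework for representations of a quiver with vertex set `V`,
arrow set `E` and source/target maps `s t : E → V`, over a field `k`. -/

structure QRep (k : Type) [Field k] {V E : Type} (s t : E → V) where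
  space : V → Type
  [acg : ∀ v, AddCommGroup (space v)]
  [mod : ∀ v, Module k (space v)]
  map : ∀ e : E, space (s e) →ₗ[k] space (t e)

attribute [instance] QRep.acg QRep.mod

namespace QRep

variable {k : Type} [Field k] {V E : Type} {s t : E → V}

/-- An isomorphism of representations: compatible linear equivalences at every vertex. -/
structure Iso (M N : QRep k s t) where
  app : ∀ v, M.space v ≃ₗ[k] N.space v
  comm : ∀ (e : E) (x : M.space (s e)), app (t e) (M.map e x) = N.map e (app (s e) x)

/-- The (binary) direct sum of two representations. -/
def prod (M N : QRep k s t) : QRep k s t where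
  space v := M.space v × N.space v
  acg v := inferInstanceAs (AddCommGroup (M.space v × N.space v))
  mod v := inferInstanceAs (Module k (M.space v × N.space v))
  map e := (M.map e).prodMap (N.map e)

/-- The direct sum of an arbitrary family of representations. -/
noncomputable def dsum {ι : Type} (F : ι → QRep k s t) : QRep k s t :=
  letI := Classical.decEq ι
  { space := fun v => DirectSum ι fun i => (F i).space v
    acg := fun v => inferInstanceAs (AddCommGroup (DirectSum ι fun i => (F i).space v))
    mod := fun v => inferInstanceAs (Module k (DirectSum ι fun i => (F i).space v))
    map := fun e => DirectSum.toModule k ι (DirectSum ι fun i => (F i).space (t e))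
      fun i => (DirectSum.lof k ι (fun j => (F j).space (t e)) i).comp ((F i).map e) }

/-- The zero representation predicate. -/
def IsZero (M : QRep k s t) : Prop := ∀ (v : V) (x : M.space v), x = 0

/-- A representation is indecomposable if it is nonzero and any direct sum
decomposition has a zero summand. -/
def Indecomposable (M : QRep k s t) : Prop :=
  ¬ M.IsZero ∧ ∀ N₁ N₂ : QRep k s t, Nonempty (Iso M (N₁.prod N₂)) → N₁.IsZero ∨ N₂.IsZero

/-- A representation is thin if all vertex spaces have dimension at most `1`. -/
def Thin (M : QRep k s t) : Prop := ∀ v : V, Module.rank k (M.space v) ≤ 1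

/-- All vertex spaces are finite-dimensional. -/
def FinDim (M : QRep k s t) : Prop := ∀ v : V, FiniteDimensional k (M.space v)

end QRep

/-- The representation `M(Q)`: the field `k` at every vertex, identity at every arrow. -/
def constRep (k : Type) [Field k] {V E : Type} (s t : E → V) : QRep k s t where
  space _ := k
  acg _ := inferInstanceAs (AddCommGroup k)
  mod _ := inferInstanceAs (Module k k)
  map _ := LinearMap.id

/-- The canonical map `(PLift P → k) → (PLift Q → k)`: the identity if `P` holds
(the two spaces both being `k` then), and zero otherwise. -/
noncomputable def restrictMap (k : Type) [Field k] (P Q : Prop) : (PLift P → k) →ₗ[k] (PLift Q → k) :=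
  letI := Classical.propDecidable P
  { toFun := fun v _ => if h : P then v ⟨h⟩ else 0
    map_add' := by
      intro a b; funext hq; by_cases hP : P <;> simp [hP]
    map_smul' := by
      intro c a; funext hq; by_cases hP : P <;> simp [hP] }

/-- The thin representation `M(Q')` attached to a set `S` of vertices (full subquiver on `S`):
one-dimensional spaces on `S`, zero outside, identity maps on arrows inside `S`,
zero maps elsewhere. -/
noncomputable def subsetRep (k : Type) [Field k] {V E : Type} (s t : E → V) (S : Set V) : QRep k s t where
  space v := PLift (v ∈ S) → k
  acg v := inferInstanceAs (AddCommGroup (PLift (v ∈ S) → k))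
  mod v := inferInstanceAs (Module k (PLift (v ∈ S) → k))
  map e := restrictMap k (s e ∈ S) (t e ∈ S)

/-- The underlying (simple) graph of a quiver. -/
def underlying {V E : Type} (s t : E → V) : SimpleGraph V :=
  SimpleGraph.fromRel fun a b => ∃ e, s e = a ∧ t e = b

open SimpleGraph Function

namespace SimpleGraph

variable {V : Type*} {G : SimpleGraph V}

lemma Reachable.of_adj_imp {p : V → Prop} (hp : ∀ a b, G.Adj a b → p a → p b) {u v : V}
    (huv : G.Reachable u v) (hu : p u) : p v := by
  obtain ⟨w⟩ := huv
  induction w with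
  | nil => exact hu
  | cons hadj _ ih => exact ih (hp _ _ hadj hu)

lemma IsAcyclic.eq_concat_or_eq_concat (hG : G.IsAcyclic) {r a b : V} {p : G.Walk r a}
    {q : G.Walk r b} (hp : p.IsPath) (hq : q.IsPath) (hab : G.Adj a b) :
    q = p.concat hab ∨ p = q.concat hab.symm := by
  have unique {x y : V} {p q : G.Walk x y} (hp : p.IsPath) (hq : q.IsPath) : p = q :=
    congrArg Subtype.val ((hG.subsingleton_path x y).elim ⟨p, hp⟩ ⟨q, hq⟩)
  classical
  by_cases hb : b ∈ p.support
  · right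
    have htake : p.takeUntil b hb = q := unique (hp.takeUntil hb) hq
    have hdrop : p.dropUntil b hb = hab.symm.toWalk := unique (hp.dropUntil hb) (.of_adj _)
    rw [← p.take_spec hb, htake, hdrop, Walk.concat_eq_append]
  · exact .inl (unique hq (hp.concat hb hab))

lemma IsTree.exists_potential {α : Type*} [Group α] (hG : G.IsTree) (d : V → V → α)
    (hd : ∀ a b, G.Adj a b → d b a = (d a b)⁻¹) :
    ∃ φ : V → α, ∀ a b, G.Adj a b → φ b = φ a * d a b := by
  obtain ⟨r⟩ := hG.connected.nonempty
  choose P hP using hG.connected.preconnected.exists_isPath r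
  refine ⟨fun w => ((P w).darts.map fun x => d x.fst x.snd).prod, fun a b hab => ?_⟩
  rcases hG.isAcyclic.eq_concat_or_eq_concat (hP a) (hP b) hab with h | h
  · simp [h, Walk.darts_concat]
  · simp [h, Walk.darts_concat, hd a b hab]

end SimpleGraph

section Quiver

variable {V E : Type} {s t : E → V}

lemma underlying_adj {e : E} (he : s e ≠ t e) : (underlying s t).Adj (s e) (t e) :=
  ⟨he, .inl ⟨e, rfl, rfl⟩⟩

lemma exists_potential_of_isTree {α : Type*} [Group α] (hloop : ∀ e, s e ≠ t e)
    (hmulti : ∀ e e' : E, (s e = s e' ∧ t e = t e') ∨ (s e = t e' ∧ t e = s e') → e = e')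
    (htree : (underlying s t).IsTree) (μ : E → α) :
    ∃ φ : V → α, ∀ e, φ (t e) = φ (s e) * μ e := by
  classical
  let d (a b : V) : α :=
    if h : ∃ e, s e = a ∧ t e = b then μ h.choose
    else if h : ∃ e, s e = b ∧ t e = a then (μ h.choose)⁻¹ else 1
  have d_arrow (e : E) : d (s e) (t e) = μ e ∧ d (t e) (s e) = (μ e)⁻¹ := by
    have forward : ∃ e', s e' = s e ∧ t e' = t e := ⟨e, rfl, rfl⟩
    have no_backward : ¬ ∃ e', s e' = t e ∧ t e' = s e := by
      rintro ⟨e', h1, h2⟩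
      exact hloop e (by rw [← h2, hmulti e' e (.inr ⟨h1, h2⟩)])
    have chosen : forward.choose = e := hmulti _ _ (.inl forward.choose_spec)
    simp only [d, dif_pos forward, dif_neg no_backward, chosen, and_self]
  obtain ⟨φ, hφ⟩ := htree.exists_potential d (by
    rintro a b ⟨-, ⟨e, rfl, rfl⟩ | ⟨e, rfl, rfl⟩⟩
    · rw [(d_arrow e).1, (d_arrow e).2]
    · rw [(d_arrow e).1, (d_arrow e).2, inv_inv])
  exact ⟨φ, fun e => by rw [hφ _ _ (underlying_adj (hloop e)), (d_arrow e).1]⟩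

end Quiver

section Linear

variable {k : Type} [Field k] {M A B : Type} [AddCommGroup M] [Module k M]
  [AddCommGroup A] [Module k A] [AddCommGroup B] [Module k B]

lemma ne_zero_iff_nontrivial_of_span {x : M} (hx : ∀ y : M, ∃ r : k, r • x = y) :
    x ≠ 0 ↔ Nontrivial M := by
  refine ⟨fun h => nontrivial_of_ne x 0 h, fun _ hx0 => ?_⟩
  obtain ⟨y, hy⟩ := exists_ne (0 : M)
  obtain ⟨r, rfl⟩ := hx y
  simp [hx0] at hy

lemma subsingleton_of_rank_prod_le_one [Nontrivial A] (h : Module.rank k (A × B) ≤ 1) :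
    Subsingleton B := by
  by_contra hB
  rw [not_subsingleton_iff_nontrivial] at hB
  rw [rank_prod'] at h
  have hA1 : 1 ≤ Module.rank k A := Cardinal.one_le_iff_pos.2 rank_pos
  have hB1 : 1 ≤ Module.rank k B := Cardinal.one_le_iff_pos.2 rank_pos
  have : (2 : Cardinal) ≤ 1 := by
    calc (2 : Cardinal) = 1 + 1 := one_add_one_eq_two.symm
      _ ≤ _ := add_le_add hA1 hB1
      _ ≤ 1 := h
  exact Cardinal.one_lt_two.not_ge this

lemma restrictMap_apply_of_pos {P Q : Prop} (hP : P) (c : PLift P → k) (q : PLift Q) :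
    restrictMap k P Q c q = c ⟨hP⟩ :=
  dif_pos hP

lemma restrictMap_bijective {P Q : Prop} (hP : P) (hQ : Q) : Bijective (restrictMap k P Q) := by
  refine ⟨fun c c' h => funext fun p => ?_, fun c => ⟨fun _ => c ⟨hQ⟩, funext fun q => ?_⟩⟩
  · simpa [restrictMap_apply_of_pos hP] using congrFun h ⟨hQ⟩
  · rw [restrictMap_apply_of_pos hP]

noncomputable def smulEquivOfSpan (P : Prop) (x : M) (hx : ∀ y : M, ∃ r : k, r • x = y)
    (hP : P ↔ x ≠ 0) : (PLift P → k) ≃ₗ[k] M :=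
  .ofBijective (LinearMap.toSpanSingleton k M x ∘ₗ LinearMap.proj ⟨trivial⟩ ∘ₗ
    restrictMap k P True) <| by
    by_cases h : P
    · refine ⟨(injective_iff_map_eq_zero _).2 fun c hc => funext fun p => ?_, fun y => ?_⟩
      · simpa [restrictMap_apply_of_pos h, hP.1 h] using hc
      · obtain ⟨r, rfl⟩ := hx y
        exact ⟨fun _ => r, by simp [restrictMap_apply_of_pos h]⟩
    · refine ⟨fun c c' _ => funext fun p => absurd p.down h, fun y => ⟨0, ?_⟩⟩
      obtain ⟨r, rfl⟩ := hx y
      simp [not_not.1 (mt hP.2 h)]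

lemma smulEquivOfSpan_apply {P : Prop} {x : M} (hx : ∀ y : M, ∃ r : k, r • x = y)
    (hP : P ↔ x ≠ 0) (h : P) (c : PLift P → k) : smulEquivOfSpan P x hx hP c = c ⟨h⟩ • x := by
  simp [smulEquivOfSpan, restrictMap_apply_of_pos h]

end Linear

namespace QRep

variable {k : Type} [Field k] {V E : Type} {s t : E → V}

def support (M : QRep k s t) : Set V := {v | Nontrivial (M.space v)}

lemma isZero_iff_support_eq_empty (M : QRep k s t) : M.IsZero ↔ M.support = ∅ := by
  simp [IsZero, support, Set.eq_empty_iff_forall_notMem, not_nontrivial_iff_subsingleton,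
    subsingleton_iff_forall_eq (0 : M.space _)]

lemma mem_support_of_map_ne_zero (M : QRep k s t) {e : E} (he : M.map e ≠ 0) :
    s e ∈ M.support ∧ t e ∈ M.support := by
  obtain ⟨x, hx⟩ : ∃ x, M.map e x ≠ 0 := by
    by_contra! h
    exact he (LinearMap.ext h)
  exact ⟨nontrivial_of_ne x 0 (by rintro rfl; simp at hx), nontrivial_of_ne _ 0 hx⟩

lemma mem_support_iff_of_bijective (M : QRep k s t) {e : E} (he : Bijective (M.map e)) :
    s e ∈ M.support ↔ t e ∈ M.support :=
  (Equiv.ofBijective _ he).nontrivial_congr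

lemma Iso.support_eq {M N : QRep k s t} (f : Iso M N) : M.support = N.support :=
  Set.ext fun v => (f.app v).toEquiv.nontrivial_congr

lemma Iso.bijective_map {M N : QRep k s t} (f : Iso M N) {e : E} (he : Bijective (M.map e)) :
    Bijective (N.map e) := by
  have : ⇑(N.map e) = f.app (t e) ∘ M.map e ∘ (f.app (s e)).symm :=
    funext fun x => by simp [f.comm]
  rw [this]
  exact (f.app _).bijective.comp (he.comp (f.app _).symm.bijective)

def sub (N : QRep k s t) (W : ∀ v, Submodule k (N.space v))
    (hW : ∀ e, ∀ x ∈ W (s e), N.map e x ∈ W (t e)) : QRep k s t where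
  space v := W v
  map e := (N.map e).restrict (hW e)

noncomputable def isoProdOfIsCompl (N : QRep k s t) {W W' : ∀ v, Submodule k (N.space v)}
    (hW : ∀ e, ∀ x ∈ W (s e), N.map e x ∈ W (t e))
    (hW' : ∀ e, ∀ x ∈ W' (s e), N.map e x ∈ W' (t e)) (hc : ∀ v, IsCompl (W v) (W' v)) :
    Iso N ((N.sub W hW).prod (N.sub W' hW')) where
  app v := (Submodule.prodEquivOfIsCompl _ _ (hc v)).symm
  comm e x := by
    erw [LinearEquiv.symm_apply_eq]
    conv_lhs => rw [← (Submodule.prodEquivOfIsCompl _ _ (hc (s e))).apply_symm_apply x]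
    rw [Submodule.coe_prodEquivOfIsCompl', map_add]
    rfl

open Classical in
noncomputable def submoduleOn (N : QRep k s t) (A : Set V) (v : V) : Submodule k (N.space v) :=
  if v ∈ A then ⊤ else ⊥

lemma submoduleOn_mapsTo {N : QRep k s t} {A : Set V}
    (hA : ∀ e, N.map e ≠ 0 → (s e ∈ A ↔ t e ∈ A)) (e : E) :
    ∀ x ∈ N.submoduleOn A (s e), N.map e x ∈ N.submoduleOn A (t e) := by
  intro x hx
  by_cases h0 : N.map e = 0
  · simp [h0]
  by_cases hs : s e ∈ A
  · simp [submoduleOn, (hA e h0).1 hs]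
  · simp_all [submoduleOn]

lemma isCompl_submoduleOn (N : QRep k s t) (A : Set V) (v : V) :
    IsCompl (N.submoduleOn A v) (N.submoduleOn Aᶜ v) := by
  by_cases hv : v ∈ A <;> simp [submoduleOn, hv, isCompl_top_bot, isCompl_bot_top]

lemma support_subset_compl_of_isZero {N : QRep k s t} {A : Set V}
    (hA : ∀ e, N.map e ≠ 0 → (s e ∈ A ↔ t e ∈ A)) (h : (N.sub _ (submoduleOn_mapsTo hA)).IsZero) :
    N.support ⊆ Aᶜ := by
  intro v (hv : Nontrivial _) hvA
  obtain ⟨x, hx⟩ := exists_ne (0 : N.space v)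
  exact hx (congrArg Subtype.val (h v ⟨x, by simp [submoduleOn, hvA]⟩))

/-- A set of vertices that no nonzero arrow enters or leaves carries a direct summand. -/
lemma Indecomposable.support_subset_or_subset_compl {N : QRep k s t} (hN : N.Indecomposable)
    {A : Set V} (hA : ∀ e, N.map e ≠ 0 → (s e ∈ A ↔ t e ∈ A)) :
    N.support ⊆ A ∨ N.support ⊆ Aᶜ := by
  have hAc : ∀ e, N.map e ≠ 0 → (s e ∈ Aᶜ ↔ t e ∈ Aᶜ) := fun e he => (hA e he).not
  rcases hN.2 _ _ ⟨N.isoProdOfIsCompl _ _ (isCompl_submoduleOn N A)⟩ with h | h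
  · exact .inr (support_subset_compl_of_isZero hA h)
  · exact .inl (compl_compl A ▸ support_subset_compl_of_isZero hAc h)

lemma Indecomposable.induce_support_connected {N : QRep k s t} (hN : N.Indecomposable) :
    ((underlying s t).induce N.support).Connected := by
  let G := (underlying s t).induce N.support
  obtain ⟨v₀, hv₀⟩ : N.support.Nonempty :=
    Set.nonempty_iff_ne_empty.2 fun h => hN.1 ((isZero_iff_support_eq_empty N).2 h)
  let A : Set V := {v | ∃ h : v ∈ N.support, G.Reachable ⟨v₀, hv₀⟩ ⟨v, h⟩}
  have hA : ∀ e, N.map e ≠ 0 → (s e ∈ A ↔ t e ∈ A) := by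
    intro e he
    obtain ⟨hs, ht⟩ := N.mem_support_of_map_ne_zero he
    rcases eq_or_ne (s e) (t e) with heq | hne
    · rw [heq]
    have hadj : G.Adj ⟨s e, hs⟩ ⟨t e, ht⟩ := underlying_adj hne
    exact ⟨fun ⟨_, h⟩ => ⟨ht, h.trans hadj.reachable⟩,
      fun ⟨_, h⟩ => ⟨hs, h.trans hadj.symm.reachable⟩⟩
  rcases hN.support_subset_or_subset_compl hA with h | h
  · refine (connected_iff _).2 ⟨fun a b => ?_, ⟨⟨v₀, hv₀⟩⟩⟩
    obtain ⟨_, ha⟩ := h a.2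
    obtain ⟨_, hb⟩ := h b.2
    exact ha.symm.trans hb
  · exact absurd ⟨hv₀, .refl _⟩ (h hv₀)

/-- Every edge of a tree is a bridge, so a zero arrow inside the support would split off a
direct summand. -/
lemma Indecomposable.map_ne_zero {N : QRep k s t} (hN : N.Indecomposable)
    (hloop : ∀ e, s e ≠ t e)
    (hmulti : ∀ e e' : E, (s e = s e' ∧ t e = t e') ∨ (s e = t e' ∧ t e = s e') → e = e')
    (hacyc : (underlying s t).IsAcyclic) {e : E} (hs : s e ∈ N.support) (ht : t e ∈ N.support) :
    N.map e ≠ 0 := by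
  intro he
  set H := (underlying s t).deleteEdges {s(s e, t e)}
  let A : Set V := {v | H.Reachable (s e) v}
  have hA : ∀ f, N.map f ≠ 0 → (s f ∈ A ↔ t f ∈ A) := by
    intro f hf
    have hadj : H.Adj (s f) (t f) := by
      refine deleteEdges_adj.2 ⟨underlying_adj (hloop f), fun hfe => ?_⟩
      rw [Set.mem_singleton_iff, Sym2.eq_iff] at hfe
      exact hf (hmulti f e hfe ▸ he)
    exact ⟨fun h => h.trans hadj.reachable, fun h => h.trans hadj.symm.reachable⟩
  rcases hN.support_subset_or_subset_compl hA with h | h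
  · exact isAcyclic_iff_forall_adj_isBridge.1 hacyc (underlying_adj (hloop e)) (h ht)
  · exact h hs (.refl _)

lemma indecomposable_of_thin {M : QRep k s t} (hM : M.Thin)
    (hbij : ∀ e, s e ∈ M.support → t e ∈ M.support → Bijective (M.map e))
    (hconn : ((underlying s t).induce M.support).Connected) : M.Indecomposable := by
  refine ⟨fun h => ?_, fun N₁ N₂ ⟨f⟩ => ?_⟩
  · obtain ⟨⟨v, hv⟩⟩ := hconn.nonempty
    simp [(isZero_iff_support_eq_empty M).1 h] at hv
  have hsupp : ∀ v, v ∈ M.support ↔ Nontrivial (N₁.space v × N₂.space v) :=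
    fun v => f.support_eq ▸ Iff.rfl
  have sub₁ : N₁.support ⊆ M.support := fun v (_ : Nontrivial _) => (hsupp v).2 inferInstance
  have sub₂ : N₂.support ⊆ M.support := fun v (_ : Nontrivial _) => (hsupp v).2 inferInstance
  have not_both : ∀ v ∈ N₁.support, v ∉ N₂.support := fun v (_ : Nontrivial _) h₂ =>
    have := subsingleton_of_rank_prod_le_one ((f.app v).rank_eq ▸ hM v)
    not_nontrivial _ h₂
  have closed : ∀ a b : M.support, ((underlying s t).induce M.support).Adj a b →
      a.1 ∈ N₁.support → b.1 ∈ N₁.support := by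
    have hN₁ : ∀ e, s e ∈ M.support → t e ∈ M.support →
        (s e ∈ N₁.support ↔ t e ∈ N₁.support) := fun e hs ht =>
      N₁.mem_support_iff_of_bijective (Prod.map_bijective.1 (f.bijective_map (hbij e hs ht))).1
    rintro ⟨a, ha⟩ ⟨b, hb⟩ ⟨-, ⟨e, rfl, rfl⟩ | ⟨e, rfl, rfl⟩⟩
    · exact (hN₁ e ha hb).1
    · exact (hN₁ e hb ha).2
  rw [isZero_iff_support_eq_empty, isZero_iff_support_eq_empty]
  by_cases h₁ : N₁.support = ∅
  · exact .inl h₁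
  obtain ⟨v₀, hv₀⟩ := Set.nonempty_iff_ne_empty.2 h₁
  refine .inr (Set.eq_empty_of_forall_notMem fun v hv => not_both v ?_ hv)
  exact (hconn.preconnected ⟨v₀, sub₁ hv₀⟩ ⟨v, sub₂ hv⟩).of_adj_imp closed hv₀

lemma mem_support_iff_ne_zero_of_span (N : QRep k s t) {v : V} {x : N.space v}
    (hx : ∀ y : N.space v, ∃ r : k, r • x = y) : v ∈ N.support ↔ x ≠ 0 :=
  (ne_zero_iff_nontrivial_of_span hx).symm

noncomputable def isoSubsetRepSupport (N : QRep k s t) (x : ∀ v, N.space v)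
    (hx : ∀ v, ∀ y : N.space v, ∃ r : k, r • x v = y)
    (hflat : ∀ e, s e ∈ N.support → t e ∈ N.support → N.map e (x (s e)) = x (t e)) :
    Iso (subsetRep k s t N.support) N where
  app v := smulEquivOfSpan _ (x v) (hx v) (N.mem_support_iff_ne_zero_of_span (hx v))
  comm e := by
    show ∀ c, smulEquivOfSpan _ _ _ _ (restrictMap k _ _ c) = N.map e (smulEquivOfSpan _ _ _ _ c)
    intro c
    by_cases ht : t e ∈ N.support
    swap
    · have : Subsingleton (N.space (t e)) := not_nontrivial_iff_subsingleton.1 ht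
      exact Subsingleton.elim _ _
    by_cases hs : s e ∈ N.support
    swap
    · obtain rfl : c = 0 := funext fun p => absurd p.down hs
      simp only [map_zero]
    rw [smulEquivOfSpan_apply _ _ ht, smulEquivOfSpan_apply _ _ hs, map_smul, hflat e hs ht,
      restrictMap_apply_of_pos hs]

end QRep

section SubsetRep

variable {k : Type} [Field k] {V E : Type} {s t : E → V}

lemma subsetRep_support (S : Set V) : (subsetRep k s t S).support = S := by
  ext v
  show Nontrivial (PLift (v ∈ S) → k) ↔ v ∈ S
  refine ⟨fun h => by_contra fun hv => ?_, fun hv => ?_⟩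
  · have : IsEmpty (PLift (v ∈ S)) := ⟨fun p => hv p.down⟩
    exact not_nontrivial _ h
  · have : Nonempty (PLift (v ∈ S)) := ⟨⟨hv⟩⟩
    infer_instance

lemma subsetRep_thin (S : Set V) : (subsetRep k s t S).Thin := fun v => by
  classical
  show Module.rank k (PLift (v ∈ S) → k) ≤ 1
  rw [rank_fun', Nat.cast_le_one, Fintype.card_le_one_iff_subsingleton]
  infer_instance

lemma subsetRep_indecomposable {S : Set V} (hS : ((underlying s t).induce S).Connected) :
    (subsetRep k s t S).Indecomposable := by
  refine QRep.indecomposable_of_thin (subsetRep_thin S) (fun e hs ht => ?_) ?_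
  · rw [subsetRep_support] at hs ht
    exact restrictMap_bijective hs ht
  · rwa [subsetRep_support]

/-- Rescaling spanning vectors by a potential of the tree makes every arrow inside the support
carry one to the next. -/
theorem QRep.Indecomposable.nonempty_iso_subsetRep_support {N : QRep k s t}
    (hN : N.Indecomposable) (hthin : N.Thin) (hloop : ∀ e, s e ≠ t e)
    (hmulti : ∀ e e' : E, (s e = s e' ∧ t e = t e') ∨ (s e = t e' ∧ t e = s e') → e = e')
    (htree : (underlying s t).IsTree) : Nonempty (QRep.Iso (subsetRep k s t N.support) N) := by
  classical
  choose x₀ hx₀ using fun v => rank_le_one_iff.1 (hthin v)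
  choose c hc using fun e => hx₀ (t e) (N.map e (x₀ (s e)))
  have hc_ne : ∀ e, s e ∈ N.support → t e ∈ N.support → c e ≠ 0 := fun e hs ht hc0 =>
    hN.map_ne_zero hloop hmulti htree.isAcyclic hs ht <| LinearMap.ext fun y => by
      obtain ⟨r, rfl⟩ := hx₀ _ y
      rw [map_smul, ← hc e, hc0, zero_smul, smul_zero, LinearMap.zero_apply]
  obtain ⟨φ, hφ⟩ := exists_potential_of_isTree hloop hmulti htree
    fun e => if h : c e = 0 then 1 else Units.mk0 (c e) h
  refine ⟨N.isoSubsetRepSupport (fun v => (φ v : k) • x₀ v) (fun v y => ?_) fun e hs ht => ?_⟩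
  · obtain ⟨r, rfl⟩ := hx₀ v y
    exact ⟨r * (φ v)⁻¹, by rw [smul_smul, mul_assoc, Units.inv_mul, mul_one]⟩
  · rw [map_smul, ← hc, smul_smul, hφ, dif_neg (hc_ne e hs ht), Units.val_mul, Units.val_mk0]

end SubsetRep

-- A connected subquiver of a tree quiver contains every arrow between its vertices, so it is
-- encoded by its vertex set `S`.
theorem stmt6_general (k : Type) [Field k] {V E : Type} (s t : E → V)
    (hloop : ∀ e, s e ≠ t e)
    (hmulti : ∀ e e' : E,
      (s e = s e' ∧ t e = t e') ∨ (s e = t e' ∧ t e = s e') → e = e')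
    (htree : (underlying s t).IsTree) :
    (∀ S : Set V, ((underlying s t).induce S).Connected →
      (subsetRep k s t S).Thin ∧ (subsetRep k s t S).Indecomposable) ∧
    (∀ S S' : Set V, ((underlying s t).induce S).Connected →
      ((underlying s t).induce S').Connected →
      Nonempty (QRep.Iso (subsetRep k s t S) (subsetRep k s t S')) → S = S') ∧
    (∀ N : QRep k s t, N.Thin → N.Indecomposable →
      ∃ S : Set V, ((underlying s t).induce S).Connected ∧
        Nonempty (QRep.Iso (subsetRep k s t S) N)) := by
  refine ⟨fun S hS => ⟨subsetRep_thin S, subsetRep_indecomposable hS⟩, fun S S' _ _ ⟨f⟩ => ?_,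
    fun N hthin hN => ⟨N.support, hN.induce_support_connected,
      hN.nonempty_iso_subsetRep_support hthin hloop hmulti htree⟩⟩
  simpa only [subsetRep_support] using f.support_eq

/-- For a finite tree quiver `Q`, the assignment `S ↦ M(S)` (full subquiver
on a vertex set `S`) is a bijection between connected subquivers of `Q` (equivalently, vertex
sets `S` whose induced subgraph is connected, connectedness forcing fullness in a tree) and
isomorphism classes of thin indecomposable representations of `Q`: each `M(S)` is thin and
indecomposable, the assignment is injective up to isomorphism, and every thin indecomposable
representation is isomorphic to some `M(S)`. -/
theorem stmt6 (k : Type) [Field k] {V E : Type} [Fintype V] [Fintype E] (s t : E → V)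
    (hloop : ∀ e, s e ≠ t e)
    (hmulti : ∀ e e' : E,
      (s e = s e' ∧ t e = t e') ∨ (s e = t e' ∧ t e = s e') → e = e')
    (htree : (underlying s t).IsTree) :
    (∀ S : Set V, ((underlying s t).induce S).Connected →
      (subsetRep k s t S).Thin ∧ (subsetRep k s t S).Indecomposable) ∧
    (∀ S S' : Set V, ((underlying s t).induce S).Connected →
      ((underlying s t).induce S').Connected →
      Nonempty (QRep.Iso (subsetRep k s t S) (subsetRep k s t S')) → S = S') ∧
    (∀ N : QRep k s t, N.Thin → N.Indecomposable →
      ∃ S : Set V, ((underlying s t).induce S).Connected ∧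
        Nonempty (QRep.Iso (subsetRep k s t S) N)) :=
  stmt6_general k s t hloop hmulti htree
end

section
/- Let Q be a finite connected quiver such that every indecomposable finite-dimensional representation of Q is thin. Then the underlying graph of Q is a Dynkin graph of type A, i.e. Q is a quiver of type A_n for some n. -/
/-! If some arrow `e₀` can be removed without disconnecting `Q`, the representation with `k²` at
every vertex, the identity on every other arrow and a Jordan block on `e₀` is indecomposable: an
idempotent endomorphism is then the same matrix at every vertex and commutes with the Jordan
block. Hence `Q` is a tree without loops or multiple arrows. If some vertex `c` had three
neighbours, the representation with `k²` at `c` and three distinct lines at the neighbours (a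
`D₄`) would have only scalar endomorphisms, so it would be indecomposable as well. So every
vertex lies on at most two arrows, and a tree with this property is a path: delete a leaf, label
the remaining path by induction, and note that the neighbour of the leaf must be one of its
ends. -/

namespace QRep

variable {k : Type} [Field k] {V E : Type} {s t : E → V}

def IsEnd (M : QRep k s t) (φ : ∀ v, Module.End k (M.space v)) : Prop :=
  ∀ e x, φ (t e) (M.map e x) = M.map e (φ (s e) x)

theorem Iso.isEnd_conj {M N : QRep k s t} (f : Iso M N) {φ : ∀ v, Module.End k (N.space v)}
    (hφ : N.IsEnd φ) : M.IsEnd fun v => (f.app v).symm.conj (φ v) := by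
  intro e x
  simp only [LinearEquiv.conj_apply_apply, LinearEquiv.symm_symm]
  rw [LinearEquiv.symm_apply_eq, f.comm, f.comm, LinearEquiv.apply_symm_apply, hφ]

def prodFst (N₁ N₂ : QRep k s t) (v : V) : Module.End k ((N₁.prod N₂).space v) :=
  (LinearMap.inl k (N₁.space v) (N₂.space v)).comp (LinearMap.fst k _ _)

theorem isEnd_prodFst (N₁ N₂ : QRep k s t) : (N₁.prod N₂).IsEnd (prodFst N₁ N₂) := by
  intro e x
  show ((N₁.map e x.1, N₂.map e x.2).1, 0) = (N₁.map e x.1, N₂.map e 0)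
  simp

theorem indecomposable_of_forall_isIdempotentElem (M : QRep k s t) (hM : ¬ M.IsZero)
    (h : ∀ φ, M.IsEnd φ → (∀ v, IsIdempotentElem (φ v)) → φ = 0 ∨ φ = 1) :
    M.Indecomposable := by
  refine ⟨hM, fun N₁ N₂ ⟨f⟩ => ?_⟩
  have hidem (v) : IsIdempotentElem ((f.app v).symm.conj (prodFst N₁ N₂ v)) := by
    refine LinearMap.ext fun x => ?_
    rw [Module.End.mul_apply, LinearEquiv.conj_apply_apply, LinearEquiv.conj_apply_apply,
      LinearEquiv.symm_symm, LinearEquiv.apply_symm_apply]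
    rfl
  rcases h _ (f.isEnd_conj (isEnd_prodFst N₁ N₂)) hidem with h0 | h1
  · left
    intro v y
    have hP : prodFst N₁ N₂ v = 0 :=
      (f.app v).symm.conj.injective ((congr_fun h0 v).trans (map_zero _).symm)
    exact congr_arg Prod.fst (LinearMap.congr_fun hP (y, 0))
  · right
    intro v y
    have hP : prodFst N₁ N₂ v = 1 :=
      (f.app v).symm.conj.injective ((congr_fun h1 v).trans (LinearEquiv.conj_id _).symm)
    exact (congr_arg Prod.snd (LinearMap.congr_fun hP (0, y))).symm

theorem indecomposable_of_forall_isEnd_eq_smul (M : QRep k s t) (hM : ¬ M.IsZero)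
    (h : ∀ φ, M.IsEnd φ → ∃ μ : k, φ = μ • 1) : M.Indecomposable := by
  refine M.indecomposable_of_forall_isIdempotentElem hM fun φ hφ hidem => ?_
  obtain ⟨μ, rfl⟩ := h φ hφ
  obtain ⟨v, x, hx⟩ : ∃ v, ∃ x : M.space v, x ≠ 0 := by simpa [IsZero] using hM
  have hμ : IsIdempotentElem μ := by
    have := LinearMap.congr_fun (hidem v) x
    simp only [Module.End.mul_apply, Pi.smul_apply, LinearMap.smul_apply, Pi.one_apply,
      Module.End.one_apply, smul_smul] at this
    exact smul_left_injective k hx this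
  rcases IsIdempotentElem.iff_eq_zero_or_one.1 hμ with rfl | rfl <;> simp

end QRep

section Graph

variable {V E : Type} {s t : E → V}

theorem underlying_adj_s9 {a b : V} :
    (underlying s t).Adj a b ↔ a ≠ b ∧ ∃ e, s(s e, t e) = s(a, b) := by
  simp only [underlying, SimpleGraph.fromRel_adj, Sym2.eq_iff]
  grind

theorem eq_of_reachable_underlying {α : Type*} {f : V → α} (hf : ∀ e, f (s e) = f (t e))
    {a b : V} (h : (underlying s t).Reachable a b) : f a = f b := by
  obtain ⟨p⟩ := h
  induction p with
  | nil => rfl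
  | cons hab _ ih =>
    obtain ⟨-, e, he⟩ := underlying_adj_s9.1 hab
    rcases Sym2.eq_iff.1 he with ⟨rfl, rfl⟩ | ⟨rfl, rfl⟩
    · exact (hf e).trans ih
    · exact (hf e).symm.trans ih

theorem underlying_le_underlying_erase {e₀ : E}
    (h : s e₀ ≠ t e₀ → ∃ e ≠ e₀, s(s e, t e) = s(s e₀, t e₀)) :
    underlying s t ≤ underlying (fun e : {e // e ≠ e₀} => s e) (fun e => t e) := by
  intro a b hab
  obtain ⟨hne, e, he⟩ := underlying_adj_s9.1 hab
  refine underlying_adj_s9.2 ⟨hne, ?_⟩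
  by_cases he₀ : e = e₀
  · subst he₀
    obtain ⟨e', he', he'e⟩ := h fun hst => hne <| by
      rcases Sym2.eq_iff.1 he with ⟨rfl, rfl⟩ | ⟨rfl, rfl⟩ <;> simp [hst]
    exact ⟨⟨e', he'⟩, he'e.trans he⟩
  · exact ⟨⟨e, he₀⟩, he⟩

theorem exists_connected_underlying_erase [Finite V] [Finite E]
    (hconn : (underlying s t).Connected) (hcard : Nat.card V ≤ Nat.card E) :
    ∃ e₀ : E, (underlying (fun e : {e // e ≠ e₀} => s e) (fun e => t e)).Connected := by
  obtain ⟨T, hTG, hT⟩ := hconn.exists_isTree_le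
  have hrep (x : T.edgeSet) : ∃ e, s(s e, t e) = x := by
    obtain ⟨x, hx⟩ := x
    induction x using Sym2.ind with
    | _ a b => exact (underlying_adj_s9.1 (hTG hx)).2
  -- `g` realises each edge of the spanning tree `T` by an arrow; `T` has only `|V| - 1` edges
  choose g hg using hrep
  obtain ⟨e₀, he₀⟩ : ∃ e₀, e₀ ∉ Set.range g := by
    by_contra! hsurj
    have := Nat.card_le_card_of_surjective g hsurj
    have := (SimpleGraph.isTree_iff_connected_and_card.1 hT).2
    omega
  refine ⟨e₀, hT.connected.mono fun a b hab => underlying_adj_s9.2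
    ⟨hab.ne, ⟨g ⟨s(a, b), hab⟩, fun h => he₀ ⟨_, h⟩⟩, hg _⟩⟩

end Graph

theorem Matrix.eq_zero_or_eq_one_of_commute_jordan {k : Type} [Field k]
    {A : Matrix (Fin 2) (Fin 2) k} (hc : Commute A !![1, 1; 0, 1]) (hA : IsIdempotentElem A) :
    A = 0 ∨ A = 1 := by
  have c00 := congr_fun₂ hc.eq 0 0
  have c01 := congr_fun₂ hc.eq 0 1
  have i00 := congr_fun₂ hA.eq 0 0
  have i01 := congr_fun₂ hA.eq 0 1
  simp only [Matrix.mul_apply, Fin.sum_univ_two, Fin.isValue, Matrix.of_apply, Matrix.cons_val',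
    Matrix.cons_val_zero, Matrix.cons_val_fin_one, mul_one, Matrix.cons_val_one, mul_zero,
    add_zero, one_mul, left_eq_add] at c00 c01 i00 i01
  have h11 : A 1 1 = A 0 0 := by linear_combination -c01
  rcases IsIdempotentElem.iff_eq_zero_or_one.1 (show IsIdempotentElem (A 0 0) by
    unfold IsIdempotentElem; linear_combination i00 - A 0 1 * c00) with h | h
  · left
    have h01 : A 0 1 = 0 := by linear_combination 2 * A 0 1 * h - i01 + A 0 1 * h11
    ext i j; fin_cases i <;> fin_cases j <;> simp [h, h01, c00, h11]
  · right
    have h01 : A 0 1 = 0 := by linear_combination i01 - 2 * A 0 1 * h - A 0 1 * h11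
    ext i j; fin_cases i <;> fin_cases j <;> simp [h, h01, c00, h11]

section Jordan

variable (k : Type) [Field k] {V E : Type} (s t : E → V)

open Classical in
noncomputable abbrev jordanRep (e₀ : E) : QRep k s t where
  space _ := Fin 2 → k
  map e := if e = e₀ then Matrix.toLin' !![1, 1; 0, 1] else LinearMap.id

variable {k s t}

theorem jordanRep_map_self (e₀ : E) :
    (jordanRep k s t e₀).map e₀ = Matrix.toLin' !![1, 1; 0, 1] := by
  simp [jordanRep]

theorem jordanRep_map_of_ne {e₀ e : E} (he : e ≠ e₀) :
    (jordanRep k s t e₀).map e = LinearMap.id := by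
  simp [jordanRep, he]

theorem jordanRep_indecomposable {e₀ : E}
    (hconn : (underlying (fun e : {e // e ≠ e₀} => s e) (fun e => t e)).Connected) :
    (jordanRep k s t e₀).Indecomposable := by
  obtain ⟨v₀⟩ := hconn.nonempty
  refine QRep.indecomposable_of_forall_isIdempotentElem _ (fun h => ?_) fun φ hφ hidem => ?_
  · exact one_ne_zero (congr_fun (h v₀ fun _ => 1) 0)
  have hconst : ∀ v, φ v = φ (s e₀) := by
    refine fun v => eq_of_reachable_underlying (α := Module.End k (Fin 2 → k)) (f := φ) ?_
      (hconn.preconnected v (s e₀))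
    refine fun e => LinearMap.ext fun x => ?_
    have := hφ e x
    rw [jordanRep_map_of_ne e.2] at this
    exact this.symm
  have hcomm : φ (s e₀) ∘ₗ Matrix.toLin' !![1, 1; 0, 1] =
      Matrix.toLin' !![1, 1; 0, 1] ∘ₗ φ (s e₀) := LinearMap.ext fun x => by
    have := hφ e₀ x
    rwa [jordanRep_map_self, hconst (t e₀)] at this
  have hc : Commute (LinearMap.toMatrix' (φ (s e₀))) !![1, 1; 0, 1] := by
    have := congr_arg LinearMap.toMatrix' hcomm
    rwa [LinearMap.toMatrix'_comp, LinearMap.toMatrix'_comp, LinearMap.toMatrix'_toLin'] at this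
  rcases Matrix.eq_zero_or_eq_one_of_commute_jordan hc
    ((hidem (s e₀)).map LinearMap.toMatrixAlgEquiv') with h | h
  · left
    funext v
    rw [hconst v]
    simpa using h
  · right
    funext v
    rw [hconst v]
    exact LinearMap.toMatrix'.injective (h.trans LinearMap.toMatrix'_id.symm)

theorem jordanRep_not_thin [Nonempty V] (e₀ : E) : ¬ (jordanRep k s t e₀).Thin := fun h => by
  obtain ⟨v⟩ := ‹Nonempty V›
  have := h v
  simp [jordanRep] at this

end Jordan

section LineNil

open Submodule

variable {k : Type} [Field k]

/-- `x ↦ det(w, x) • w`: for `w ≠ 0`, its kernel and its image are both the line through `w`.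
-/
def lineNil (w : Fin 2 → k) : Module.End k (Fin 2 → k) :=
  LinearMap.smulRight (w 0 • LinearMap.proj (R := k) (φ := fun _ : Fin 2 => k) 1 -
    w 1 • LinearMap.proj (R := k) (φ := fun _ : Fin 2 => k) 0) w

theorem lineNil_apply (w x : Fin 2 → k) : lineNil w x = (w 0 * x 1 - w 1 * x 0) • w := rfl

theorem lineNil_self (w : Fin 2 → k) : lineNil w w = 0 := by
  simp [lineNil_apply, mul_comm]

theorem mem_span_of_lineNil_eq_zero {w x : Fin 2 → k} (hw : w ≠ 0) (h : lineNil w x = 0) :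
    x ∈ span k {w} := by
  have hdet : w 0 * x 1 = w 1 * x 0 := by
    rw [lineNil_apply, smul_eq_zero] at h
    exact sub_eq_zero.1 (h.resolve_right hw)
  rw [mem_span_singleton]
  by_cases h0 : w 0 = 0
  · have h1 : w 1 ≠ 0 := fun h1 => hw (funext fun i => by fin_cases i <;> assumption)
    have hx0 : x 0 = 0 := by simpa [h0, h1] using hdet.symm
    refine ⟨x 1 / w 1, funext fun i => ?_⟩
    fin_cases i <;> simp [h0, hx0, h1]
  · refine ⟨x 0 / w 0, funext fun i => ?_⟩
    fin_cases i
    · simp [h0]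
    · simp only [Fin.mk_one, Pi.smul_apply, smul_eq_mul]
      rw [div_mul_eq_mul_div, div_eq_iff h0, mul_comm (x 0), ← hdet, mul_comm]

theorem exists_lineNil_eq {w : Fin 2 → k} (hw : w ≠ 0) : ∃ z, lineNil w z = w := by
  by_cases h0 : w 0 = 0
  · have h1 : w 1 ≠ 0 := fun h1 => hw (funext fun i => by fin_cases i <;> assumption)
    exact ⟨![-(w 1)⁻¹, 0], by simp [lineNil_apply, h0, h1]⟩
  · exact ⟨![0, (w 0)⁻¹], by simp [lineNil_apply, h0]⟩

theorem Module.End.eq_smul_one_of_mapsTo_three_lines (f : Module.End k (Fin 2 → k))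
    (hf : ∀ i, f (![![1, 0], ![0, 1], ![1, 1]] i) ∈ span k {![![1, 0], ![0, 1], ![1, 1]] i}) :
    ∃ μ : k, f = μ • 1 := by
  have h₀ : f ![1, 0] ∈ span k {![1, 0]} := hf 0
  have h₁ : f ![0, 1] ∈ span k {![0, 1]} := hf 1
  have h₂ : f ![1, 1] ∈ span k {![1, 1]} := hf 2
  obtain ⟨a, ha⟩ := mem_span_singleton.1 h₀
  obtain ⟨b, hb⟩ := mem_span_singleton.1 h₁
  obtain ⟨c, hc⟩ := mem_span_singleton.1 h₂
  have hsum : (![1, 1] : Fin 2 → k) = ![1, 0] + ![0, 1] := by simp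
  rw [hsum, map_add, ← ha, ← hb] at hc
  have hca := congr_fun hc 0
  have hcb := congr_fun hc 1
  simp only [Fin.isValue, Pi.smul_apply, Pi.add_apply, Matrix.cons_val_zero, Matrix.cons_val_one,
    Matrix.cons_val_fin_one, smul_eq_mul, mul_one, mul_zero, add_zero, zero_add] at hca hcb
  refine ⟨a, LinearMap.ext fun x => ?_⟩
  have hx : x = x 0 • ![1, 0] + x 1 • ![0, 1] := by ext i; fin_cases i <;> simp
  rw [hx, map_add, map_smul, map_smul, ← ha, ← hb, ← hca, hcb]
  simp [mul_comm]

end LineNil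

section StarRep

open Submodule

variable (k : Type) [Field k] {V E : Type} (s t : E → V)

/- The `D₄` representation sits inside `k²`: the whole plane at the centre `c`, the line through
`ω v` at any other vertex `v`. Arrows into `c` are inclusions and arrows out of `c` are
`lineNil (ω a)`, so for either orientation of an arrow between `c` and `a`, an endomorphism must
preserve the line through `ω a` at `c`. -/
open Classical in
noncomputable def starSubspace (c : V) (ω : V → Fin 2 → k) (v : V) :
    Submodule k (Fin 2 → k) :=
  if v = c then ⊤ else span k {ω v}

open Classical in
noncomputable def starMap (c : V) (ω : V → Fin 2 → k) (x y : V) : Module.End k (Fin 2 → k) :=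
  if y = c then LinearMap.id else if x = c then lineNil (ω y) else 0

variable {k} {c : V} {ω : V → Fin 2 → k}

@[simp]
theorem starSubspace_center : starSubspace k c ω c = ⊤ := by
  simp [starSubspace]

theorem starSubspace_of_ne {v : V} (hv : v ≠ c) : starSubspace k c ω v = span k {ω v} := by
  simp [starSubspace, hv]

theorem starMap_mem (x y : V) (z : Fin 2 → k) :
    starMap k c ω x y z ∈ starSubspace k c ω y := by
  by_cases hy : y = c
  · simp [hy]
  rw [starSubspace_of_ne hy, starMap, if_neg hy]
  split_ifs
  · rw [lineNil_apply]
    exact smul_mem _ _ (mem_span_singleton_self _)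
  · exact zero_mem _

variable (k c ω)

noncomputable abbrev starRep : QRep k s t where
  space v := starSubspace k c ω v
  map e := (starMap k c ω (s e) (t e)).restrict fun z _ => starMap_mem (s e) (t e) z

end StarRep

section StarRepIndecomposable

open Submodule

variable {k : Type} [Field k] {V E : Type} {s t : E → V} {c : V} {ω : V → Fin 2 → k}
  {φ : ∀ v, Module.End k ((starRep k s t c ω).space v)}

theorem starRep_isEnd_center_mem_span (hφ : (starRep k s t c ω).IsEnd φ) {a : V}
    (hadj : (underlying s t).Adj c a) {w : Fin 2 → k} (hw : ω a = w) (ha : w ≠ 0) :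
    (φ c ⟨w, by simp⟩ : Fin 2 → k) ∈ span k {w} := by
  subst hw
  obtain ⟨hca, e, he⟩ := underlying_adj_s9.1 hadj
  rcases Sym2.eq_iff.1 he with ⟨rfl, rfl⟩ | ⟨rfl, rfl⟩
  · have hx : (starRep k s t (s e) ω).map e ⟨ω (t e), by simp⟩ = 0 :=
      Subtype.ext (by simp [starMap, hca.symm, lineNil_self])
    have := congr_arg Subtype.val (hφ e ⟨ω (t e), by simp⟩)
    rw [hx, map_zero] at this
    simp only [LinearMap.coe_restrict_apply, starMap, hca.symm, if_false, if_true,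
      ZeroMemClass.coe_zero] at this
    exact mem_span_of_lineNil_eq_zero ha this.symm
  · have hx : ω (s e) ∈ starSubspace k (t e) ω (s e) := by
      rw [starSubspace_of_ne hca.symm]
      exact mem_span_singleton_self _
    have key : (φ (t e) ⟨ω (s e), by simp⟩ : Fin 2 → k) = φ (s e) ⟨ω (s e), hx⟩ := by
      have := congr_arg Subtype.val (hφ e ⟨ω (s e), hx⟩)
      simp only [LinearMap.coe_restrict_apply, starMap, if_true] at this
      exact this
    rw [key, ← starSubspace_of_ne hca.symm]
    exact (φ (s e) _).2

theorem starRep_isEnd_arm_eq_smul (hφ : (starRep k s t c ω).IsEnd φ) {μ : k}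
    (hc : ∀ x, (φ c x : Fin 2 → k) = μ • x) {a : V} (hadj : (underlying s t).Adj c a)
    (ha : ω a ≠ 0) (x : (starRep k s t c ω).space a) : (φ a x : Fin 2 → k) = μ • x := by
  obtain ⟨hca, e, he⟩ := underlying_adj_s9.1 hadj
  rcases Sym2.eq_iff.1 he with ⟨rfl, rfl⟩ | ⟨rfl, rfl⟩
  · obtain ⟨r, hr⟩ := mem_span_singleton.1 ((starSubspace_of_ne hca.symm).le x.2)
    obtain ⟨z, hz⟩ := exists_lineNil_eq ha
    have hx : (starRep k s t (s e) ω).map e ⟨r • z, by simp⟩ = x := by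
      ext1
      simp [starMap, hca.symm, hz, hr]
    have := congr_arg Subtype.val (hφ e ⟨r • z, by simp⟩)
    rw [hx] at this
    simp only [LinearMap.coe_restrict_apply, starMap, hca.symm, if_false, if_true] at this
    rw [this, hc, map_smul, map_smul, hz, hr]
  · have := congr_arg Subtype.val (hφ e x)
    simp only [LinearMap.coe_restrict_apply, starMap, if_true, LinearMap.id_apply] at this
    rw [← this]
    exact hc _

theorem starRep_indecomposable {a : Fin 3 → V} (ha : Function.Injective a)
    (hadj : ∀ i, (underlying s t).Adj c (a i)) :
    (starRep k s t c (Function.extend a ![![1, 0], ![0, 1], ![1, 1]] 0)).Indecomposable := by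
  set w : Fin 3 → Fin 2 → k := ![![1, 0], ![0, 1], ![1, 1]]
  have hw : ∀ i, w i ≠ 0 := by
    intro i h
    have h0 := congr_fun h 0
    have h1 := congr_fun h 1
    fin_cases i <;> simp [w] at h0 h1
  have hωa (i : Fin 3) : Function.extend a w 0 (a i) = w i := ha.extend_apply _ _ _
  refine QRep.indecomposable_of_forall_isEnd_eq_smul _ (fun h => ?_) fun φ hφ => ?_
  · exact hw 0 (congr_arg Subtype.val (h c ⟨w 0, by simp⟩))
  obtain ⟨μ, hμ⟩ := Module.End.eq_smul_one_of_mapsTo_three_lines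
    ((LinearEquiv.ofTop _ starSubspace_center).conj (φ c)) fun i =>
      starRep_isEnd_center_mem_span hφ (hadj i) (hωa i) (hw i)
  have hc (x) : (φ c x : Fin 2 → k) = μ • x := by
    simpa [LinearEquiv.ofTop_symm_apply] using LinearMap.congr_fun hμ x
  refine ⟨μ, funext fun v => LinearMap.ext fun x => Subtype.ext ?_⟩
  show (φ v x : Fin 2 → k) = μ • x
  by_cases hvc : v = c
  · subst hvc
    exact hc x
  by_cases hva : ∃ i, a i = v
  · obtain ⟨i, rfl⟩ := hva
    exact starRep_isEnd_arm_eq_smul hφ hc (hadj i) (by rw [hωa]; exact hw i) x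
  · have hx (y : (starRep k s t c (Function.extend a w 0)).space v) : y = 0 := by
      have := (starSubspace_of_ne hvc).le y.2
      simpa [Function.extend_apply' _ _ _ hva] using this
    rw [hx x, hx (φ v 0)]
    simp

theorem starRep_not_thin : ¬ (starRep k s t c ω).Thin := fun h => by
  have : Module.rank k (starSubspace k c ω c) ≤ 1 := h c
  rw [starSubspace_center, rank_top, rank_fin_fun] at this
  norm_num at this

end StarRepIndecomposable

section Incidence

open Finset

variable {V E : Type} {s t : E → V}

open Classical in
noncomputable def incidentArrows [Fintype E] (s t : E → V) (v : V) : Finset E :=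
  {e | v ∈ s(s e, t e)}

@[simp]
theorem mem_incidentArrows [Fintype E] {v : V} {e : E} :
    e ∈ incidentArrows s t v ↔ v ∈ s(s e, t e) := by
  simp [incidentArrows]

theorem sum_card_incidentArrows_le [Fintype V] [Fintype E] :
    ∑ v, #(incidentArrows s t v) ≤ 2 * Fintype.card E := by
  classical
  calc ∑ v, #(incidentArrows s t v)
      = ∑ e, #(s(s e, t e).toFinset) := by
        simp only [incidentArrows, card_filter]
        rw [sum_comm]
        refine sum_congr rfl fun e _ => ?_
        rw [← card_filter]
        congr 1
        ext v
        simp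
    _ ≤ ∑ _e : E, 2 := sum_le_sum fun e _ => by
        rw [Sym2.card_toFinset]; split_ifs <;> omega
    _ = 2 * Fintype.card E := by simp [mul_comm]

theorem exists_card_incidentArrows_le_one [Fintype V] [Fintype E]
    (hcard : Fintype.card E < Fintype.card V) : ∃ v, #(incidentArrows s t v) ≤ 1 := by
  by_contra! h
  have := (sum_le_sum fun v _ => h v).trans (sum_card_incidentArrows_le (s := s) (t := t))
  simp only [sum_const, card_univ, smul_eq_mul] at this
  omega

theorem exists_leaf [Fintype V] [Fintype E] (hconn : (underlying s t).Connected)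
    (hV : 1 < Fintype.card V) (hE : Fintype.card E < Fintype.card V) :
    ∃ (v₀ u : V) (e₀ : E), u ≠ v₀ ∧ s(s e₀, t e₀) = s(v₀, u) ∧
      ∀ e, v₀ ∈ s(s e, t e) → e = e₀ := by
  obtain ⟨v₀, hv₀⟩ := exists_card_incidentArrows_le_one hE
  have : Nontrivial V := Fintype.one_lt_card_iff_nontrivial.1 hV
  obtain ⟨u, hadj⟩ := hconn.preconnected.exists_adj_of_nontrivial v₀
  obtain ⟨hne, e₀, he₀⟩ := underlying_adj_s9.1 hadj
  have hmem₀ : e₀ ∈ incidentArrows s t v₀ :=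
    mem_incidentArrows.2 (he₀ ▸ Sym2.mem_mk_left _ _)
  exact ⟨v₀, u, e₀, hne.symm, he₀, fun e he =>
    card_le_one.1 hv₀ _ (mem_incidentArrows.2 he) _ hmem₀⟩

end Incidence

section ThinQuiver

open Finset

variable {k : Type} [Field k] {V E : Type} {s t : E → V}

theorem not_connected_underlying_erase
    (hthin : ∀ M : QRep k s t, M.FinDim → M.Indecomposable → M.Thin) (e₀ : E) :
    ¬ (underlying (fun e : {e // e ≠ e₀} => s e) (fun e => t e)).Connected := fun hconn =>
  have := hconn.nonempty
  jordanRep_not_thin e₀ (hthin _ (fun _ => inferInstance) (jordanRep_indecomposable hconn))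

theorem card_lt_card_of_forall_thin [Fintype V] [Fintype E]
    (hthin : ∀ M : QRep k s t, M.FinDim → M.Indecomposable → M.Thin)
    (hconn : (underlying s t).Connected) : Fintype.card E < Fintype.card V := by
  by_contra! hcard
  obtain ⟨e₀, he₀⟩ := exists_connected_underlying_erase hconn
    (by simpa only [Nat.card_eq_fintype_card] using hcard)
  exact not_connected_underlying_erase hthin e₀ he₀

theorem ne_of_forall_thin (hthin : ∀ M : QRep k s t, M.FinDim → M.Indecomposable → M.Thin)
    (hconn : (underlying s t).Connected) (e : E) : s e ≠ t e := fun h =>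
  not_connected_underlying_erase hthin e
    (hconn.mono (underlying_le_underlying_erase fun h' => absurd h h'))

theorem injective_sym2_of_forall_thin
    (hthin : ∀ M : QRep k s t, M.FinDim → M.Indecomposable → M.Thin)
    (hconn : (underlying s t).Connected) : Function.Injective fun e => s(s e, t e) := by
  intro e₀ e h
  by_contra hne
  exact not_connected_underlying_erase hthin e₀
    (hconn.mono (underlying_le_underlying_erase fun _ => ⟨e, Ne.symm hne, h.symm⟩))

theorem card_incidentArrows_le_two_of_forall_thin [Fintype E]
    (hthin : ∀ M : QRep k s t, M.FinDim → M.Indecomposable → M.Thin)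
    (hconn : (underlying s t).Connected) (c : V) : #(incidentArrows s t c) ≤ 2 := by
  by_contra! h
  obtain ⟨f⟩ : Nonempty (Fin 3 ↪ incidentArrows s t c) :=
    Function.Embedding.nonempty_of_card_le (by simpa using h.nat_succ_le)
  have hmem (i : Fin 3) : c ∈ s(s (f i), t (f i)) := mem_incidentArrows.1 (f i).2
  have ha : Function.Injective fun i => Sym2.Mem.other (hmem i) := by
    refine fun i j hij => f.injective (Subtype.ext (injective_sym2_of_forall_thin hthin hconn ?_))
    change s(s (f i), t (f i)) = s(s (f j), t (f j))
    rw [← Sym2.other_spec (hmem i), ← Sym2.other_spec (hmem j)]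
    exact congr_arg _ hij
  have hadj (i : Fin 3) : (underlying s t).Adj c (Sym2.Mem.other (hmem i)) :=
    underlying_adj_s9.2 ⟨(Sym2.other_ne (Sym2.mk_isDiag_iff.not.2 (ne_of_forall_thin hthin hconn _))
      _).symm, f i, (Sym2.other_spec _).symm⟩
  exact starRep_not_thin (hthin _ (fun _ => inferInstance) (starRep_indecomposable ha hadj))

end ThinQuiver

section LinearLabelling

open Finset

variable {V E : Type} {s t : E → V} {n : ℕ} {φ : V ≃ Fin (n + 1)} {ψ : E ≃ Fin n}

def IsLinearLabelling (s t : E → V) (φ : V ≃ Fin (n + 1)) (ψ : E ≃ Fin n) : Prop :=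
  ∀ e, s(φ (s e), φ (t e)) = s((ψ e).castSucc, (ψ e).succ)

theorem IsLinearLabelling.rev (h : IsLinearLabelling s t φ ψ) :
    IsLinearLabelling s t (φ.trans Fin.revPerm) (ψ.trans Fin.revPerm) := by
  intro e
  have := congr_arg (Sym2.map Fin.rev) (h e)
  simp only [Sym2.map_mk, Fin.rev_castSucc, Fin.rev_succ] at this
  simpa [Sym2.eq_swap] using this

theorem IsLinearLabelling.mem_of_apply_eq (h : IsLinearLabelling s t φ ψ) {v : V} {e : E}
    (hv : φ v = (ψ e).castSucc ∨ φ v = (ψ e).succ) : v ∈ s(s e, t e) := by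
  have hmem : φ v ∈ s(φ (s e), φ (t e)) := by
    rw [h e]
    rcases hv with hv | hv <;> simp [hv]
  rcases Sym2.mem_iff.1 hmem with hv | hv <;> simp [φ.injective hv]

theorem IsLinearLabelling.exists_eq_last [Fintype E] (h : IsLinearLabelling s t φ ψ) {u : V}
    (hu : #(incidentArrows s t u) ≤ 1) :
    ∃ (φ' : V ≃ Fin (n + 1)) (ψ' : E ≃ Fin n),
      IsLinearLabelling s t φ' ψ' ∧ φ' u = Fin.last n := by
  by_cases hl : φ u = Fin.last n
  · exact ⟨φ, ψ, h, hl⟩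
  by_cases h0 : φ u = 0
  · refine ⟨_, _, h.rev, ?_⟩
    simp [h0]
  have hpred : φ u = (ψ (ψ.symm ((φ u).pred h0))).succ := by simp
  have hcast : φ u = (ψ (ψ.symm ((φ u).castPred hl))).castSucc := by simp
  have hne : ψ.symm ((φ u).pred h0) ≠ ψ.symm ((φ u).castPred hl) := by
    rw [Ne, ψ.symm.apply_eq_iff_eq, Fin.ext_iff]
    simp only [Fin.val_pred, Fin.coe_castPred]
    have : (φ u : ℕ) ≠ 0 := Fin.val_ne_iff.2 h0
    omega
  exact absurd (card_le_one.1 hu _ (mem_incidentArrows.2 (h.mem_of_apply_eq (Or.inr hpred)))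
    _ (mem_incidentArrows.2 (h.mem_of_apply_eq (Or.inl hcast)))) hne

theorem IsLinearLabelling.extend {v₀ : V} {e₀ : E}
    {s' t' : {e // e ≠ e₀} → {v // v ≠ v₀}} (hs : ∀ e, (s' e : V) = s e)
    (ht : ∀ e, (t' e : V) = t e) {φ : {v // v ≠ v₀} ≃ Fin (n + 1)} {ψ : {e // e ≠ e₀} ≃ Fin n}
    (h : IsLinearLabelling s' t' φ ψ) {u : {v // v ≠ v₀}} (hu : φ u = Fin.last n)
    (he₀ : s(s e₀, t e₀) = s((u : V), v₀)) :
    ∃ (φ' : V ≃ Fin (n + 2)) (ψ' : E ≃ Fin (n + 1)), IsLinearLabelling s t φ' ψ' := by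
  classical
  let φ' :=
    (Equiv.optionSubtypeNe v₀).symm.trans ((Equiv.optionCongr φ).trans finSuccEquivLast.symm)
  let ψ' :=
    (Equiv.optionSubtypeNe e₀).symm.trans ((Equiv.optionCongr ψ).trans finSuccEquivLast.symm)
  have hφ₀ : φ' v₀ = Fin.last (n + 1) := by simp [φ']
  have hφ (v : {v // v ≠ v₀}) : φ' v = (φ v).castSucc := by
    simp [φ', Equiv.optionSubtypeNe_symm_of_ne v.2]
  have hψ₀ : ψ' e₀ = Fin.last n := by simp [ψ']
  have hψ (e : {e // e ≠ e₀}) : ψ' e = (ψ e).castSucc := by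
    simp [ψ', Equiv.optionSubtypeNe_symm_of_ne e.2]
  refine ⟨φ', ψ', fun e => ?_⟩
  by_cases he : e = e₀
  · subst he
    rw [← Sym2.map_mk, he₀, Sym2.map_mk, hφ, hu, hφ₀, hψ₀, Fin.succ_last]
  · have := congr_arg (Sym2.map Fin.castSucc) (h ⟨e, he⟩)
    rw [Sym2.map_mk, Sym2.map_mk, ← hφ, ← hφ, hs, ht, ← Fin.succ_castSucc, ← hψ] at this
    exact this

end LinearLabelling

section Subquiver

open Finset

variable {V E : Type} {s t : E → V} {v₀ : V} {e₀ : E}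
  {s' t' : {e // e ≠ e₀} → {v // v ≠ v₀}}

theorem connected_underlying_subquiver (hconn : (underlying s t).Connected) {u : V}
    (hu : u ≠ v₀) (he₀ : s(s e₀, t e₀) = s(v₀, u))
    (hleaf : ∀ e, v₀ ∈ s(s e, t e) → e = e₀) (hs : ∀ e, (s' e : V) = s e)
    (ht : ∀ e, (t' e : V) = t e) : (underlying s' t').Connected := by
  have hsub : ∀ v ∉ ({v₀}ᶜ : Set V), ((underlying s t).neighborSet v).Subsingleton := by
    intro v hv w₁ hw₁ w₂ hw₂
    obtain rfl : v = v₀ := by simpa using hv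
    obtain ⟨-, e₁, he₁⟩ := underlying_adj_s9.1 hw₁
    obtain ⟨-, e₂, he₂⟩ := underlying_adj_s9.1 hw₂
    rw [hleaf e₁ (he₁ ▸ Sym2.mem_mk_left _ _)] at he₁
    rw [hleaf e₂ (he₂ ▸ Sym2.mem_mk_left _ _)] at he₂
    exact Sym2.congr_right.1 (he₁.symm.trans he₂)
  have : Nonempty {v // v ≠ v₀} := ⟨⟨u, hu⟩⟩
  refine ⟨(hconn.preconnected.induce_of_degree_eq_one hsub).mono fun a b hab => ?_⟩
  obtain ⟨hne, e, he⟩ := underlying_adj_s9.1 hab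
  have he' : e ≠ e₀ := by
    rintro rfl
    rcases Sym2.mem_iff.1 (he ▸ he₀ ▸ Sym2.mem_mk_left v₀ u) with h | h
    exacts [a.2 h.symm, b.2 h.symm]
  refine underlying_adj_s9.2 ⟨fun h => hne (congr_arg Subtype.val h), ⟨e, he'⟩, ?_⟩
  apply Sym2.map.injective Subtype.val_injective
  simp [Sym2.map_mk, hs, ht, he]

theorem card_incidentArrows_subquiver_le [Fintype E] [DecidableEq E]
    (hs : ∀ e, (s' e : V) = s e) (ht : ∀ e, (t' e : V) = t e) (v : {v // v ≠ v₀}) :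
    #(incidentArrows s' t' v) ≤ #((incidentArrows s t v).erase e₀) := by
  refine card_le_card_of_injOn Subtype.val (fun e he => ?_) Subtype.val_injective.injOn
  have hmem := Sym2.mem_iff.1 (mem_incidentArrows.1 (mem_coe.1 he))
  simp only [coe_erase, Set.mem_sdiff, mem_coe, mem_incidentArrows, Set.mem_singleton_iff]
  refine ⟨Sym2.mem_iff.2 ?_, e.2⟩
  rcases hmem with h | h
  · exact Or.inl (by rw [← hs, h])
  · exact Or.inr (by rw [← ht, h])

end Subquiver

open Finset in
theorem exists_isLinearLabelling (n : ℕ) :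
    ∀ {V E : Type} [Fintype V] [Fintype E] {s t : E → V}, Fintype.card V = n + 1 →
      (underlying s t).Connected → (∀ v, #(incidentArrows s t v) ≤ 2) →
      Fintype.card E < Fintype.card V →
      ∃ (m : ℕ) (φ : V ≃ Fin (m + 1)) (ψ : E ≃ Fin m), IsLinearLabelling s t φ ψ := by
  induction n with
  | zero =>
    intro V E _ _ s t hV _ _ hE
    have : IsEmpty E := Fintype.card_eq_zero_iff.1 (by omega)
    exact ⟨0, Fintype.equivFinOfCardEq hV, Equiv.equivOfIsEmpty E (Fin 0), isEmptyElim⟩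
  | succ n ih =>
    intro V E _ _ s t hV hconn hdeg hE
    classical
    obtain ⟨v₀, u, e₀, hu, he₀, hleaf⟩ := exists_leaf hconn (by omega) hE
    let s' (e : {e // e ≠ e₀}) : {v // v ≠ v₀} :=
      ⟨s e, fun h => e.2 (hleaf _ (h ▸ Sym2.mem_mk_left _ _))⟩
    let t' (e : {e // e ≠ e₀}) : {v // v ≠ v₀} :=
      ⟨t e, fun h => e.2 (hleaf _ (h ▸ Sym2.mem_mk_right _ _))⟩
    have hdeg' (v : {v // v ≠ v₀}) := card_incidentArrows_subquiver_le (s' := s') (t' := t')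
      (fun _ => rfl) (fun _ => rfl) v
    have hcardE : 0 < Fintype.card E := Fintype.card_pos_iff.2 ⟨e₀⟩
    obtain ⟨m, φ, ψ, h⟩ := ih (s := s') (t := t')
      (by rw [Fintype.card_subtype_compl, Fintype.card_subtype_eq]; omega)
      (connected_underlying_subquiver hconn hu he₀ hleaf (fun _ => rfl) (fun _ => rfl))
      (fun v => (hdeg' v).trans ((card_erase_le).trans (hdeg v)))
      (by rw [Fintype.card_subtype_compl, Fintype.card_subtype_compl, Fintype.card_subtype_eq,
        Fintype.card_subtype_eq]; omega)
    -- `u` lies on `e₀` and on at most one arrow of the subquiver, so it is an end of the path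
    have hu₁ : #(incidentArrows s' t' ⟨u, hu⟩) ≤ 1 := by
      have := hdeg u
      rw [← card_erase_add_one
        (mem_incidentArrows.2 (he₀ ▸ Sym2.mem_mk_right v₀ u))] at this
      exact (hdeg' ⟨u, hu⟩).trans (show #((incidentArrows s t u).erase e₀) ≤ 1 by omega)
    obtain ⟨φ', ψ', h', hlast⟩ := h.exists_eq_last hu₁
    exact ⟨m + 1, h'.extend (fun _ => rfl) (fun _ => rfl) hlast (he₀.trans Sym2.eq_swap)⟩

/-- If `Q` is a finite connected quiver all of whose indecomposable
finite-dimensional representations are thin, then `Q` is of type `A`: there are bijections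
`φ : V ≃ Fin (n+1)` and `ψ : E ≃ Fin n` identifying `Q` with the linear quiver
(one edge between `i` and `i+1`, in some orientation, for each `i`). -/
theorem stmt9 (k : Type) [Field k] {V E : Type} [Fintype V] [Fintype E] (s t : E → V)
    (hconn : (underlying s t).Connected)
    (hthin : ∀ M : QRep k s t, M.FinDim → M.Indecomposable → M.Thin) :
    ∃ (n : ℕ) (φ : V ≃ Fin (n + 1)) (ψ : E ≃ Fin n),
      ∀ e : E,
        (φ (s e) = (ψ e).castSucc ∧ φ (t e) = (ψ e).succ) ∨
        (φ (s e) = (ψ e).succ ∧ φ (t e) = (ψ e).castSucc) := by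
  have := hconn.nonempty
  obtain ⟨n, hn⟩ := Nat.exists_eq_succ_of_ne_zero (Fintype.card_ne_zero (α := V))
  obtain ⟨m, φ, ψ, h⟩ := exists_isLinearLabelling n hn hconn
    (card_incidentArrows_le_two_of_forall_thin hthin hconn)
    (card_lt_card_of_forall_thin hthin hconn)
  exact ⟨m, φ, ψ, fun e => Sym2.eq_iff.1 (h e)⟩
end

section
/- For n ≥ 4 and 1 ≤ r ≤ n−3, the r-twin representation of the quiver Q(n) is indecomposable, where the r-twin representation has k at vertices 1 and 2, k² at vertices 3,...,r+2, k at vertices r+3,...,n, the two canonical projections k² → k at the arrows into vertices 1 and 2, identity maps between consecutive copies of k² and between consecutive copies of k, and the diagonal embedding k → k² at the arrow from vertex r+3 to vertex r+2. -/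
/-! A framework for representations of the quiver `Q(n)` of type `D_n` (`n = m + 3`):
vertices `1, 2` (two tips, here `T1`, `T2`), and an arm `3, 4, ..., n` (here `A 0, ..., A m`),
with arrows `π₁ : 3 → 1`, `π₂ : 3 → 2` (here `p1`, `p2`) and `i+1 → i` for `3 ≤ i < n`
(here `f i : A i.succ →ₗ A i.castSucc`). -/

structure DRep (k : Type) [Field k] (m : ℕ) where
  T1 : Type
  T2 : Type
  A : Fin (m + 1) → Type
  [acg1 : AddCommGroup T1]
  [mod1 : Module k T1]
  [acg2 : AddCommGroup T2]
  [mod2 : Module k T2]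
  [acgA : ∀ i, AddCommGroup (A i)]
  [modA : ∀ i, Module k (A i)]
  p1 : A ⟨0, Nat.succ_pos m⟩ →ₗ[k] T1
  p2 : A ⟨0, Nat.succ_pos m⟩ →ₗ[k] T2
  f : ∀ i : Fin m, A i.succ →ₗ[k] A i.castSucc

attribute [instance] DRep.acg1 DRep.mod1 DRep.acg2 DRep.mod2 DRep.acgA DRep.modA

namespace DRep

variable {k : Type} [Field k] {m : ℕ}

/-- A morphism of representations of `Q(m+3)`. -/
structure Hom (M N : DRep k m) where
  g1 : M.T1 →ₗ[k] N.T1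
  g2 : M.T2 →ₗ[k] N.T2
  gA : ∀ i, M.A i →ₗ[k] N.A i
  comm1 : ∀ x, g1 (M.p1 x) = N.p1 (gA ⟨0, Nat.succ_pos m⟩ x)
  comm2 : ∀ x, g2 (M.p2 x) = N.p2 (gA ⟨0, Nat.succ_pos m⟩ x)
  commf : ∀ (i : Fin m) x, gA i.castSucc (M.f i x) = N.f i (gA i.succ x)

/-- An isomorphism of representations of `Q(m+3)`. -/
structure Iso (M N : DRep k m) where
  g1 : M.T1 ≃ₗ[k] N.T1
  g2 : M.T2 ≃ₗ[k] N.T2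
  gA : ∀ i, M.A i ≃ₗ[k] N.A i
  comm1 : ∀ x, g1 (M.p1 x) = N.p1 (gA ⟨0, Nat.succ_pos m⟩ x)
  comm2 : ∀ x, g2 (M.p2 x) = N.p2 (gA ⟨0, Nat.succ_pos m⟩ x)
  commf : ∀ (i : Fin m) x, gA i.castSucc (M.f i x) = N.f i (gA i.succ x)

/-- The identity morphism. -/
def Hom.id (M : DRep k m) : Hom M M :=
  ⟨LinearMap.id, LinearMap.id, fun _ => LinearMap.id,
    fun _ => rfl, fun _ => rfl, fun _ _ => rfl⟩

/-- Composition of morphisms. -/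
def Hom.comp {M N P : DRep k m} (ψ : Hom N P) (φ : Hom M N) : Hom M P where
  g1 := ψ.g1.comp φ.g1
  g2 := ψ.g2.comp φ.g2
  gA i := (ψ.gA i).comp (φ.gA i)
  comm1 x := by simp only [LinearMap.comp_apply]; rw [φ.comm1, ψ.comm1]
  comm2 x := by simp only [LinearMap.comp_apply]; rw [φ.comm2, ψ.comm2]
  commf i x := by simp only [LinearMap.comp_apply]; rw [φ.commf, ψ.commf]

/-- The (binary) direct sum of two representations. -/
def prod (M N : DRep k m) : DRep k m where
  T1 := M.T1 × N.T1
  T2 := M.T2 × N.T2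
  A i := M.A i × N.A i
  acgA i := inferInstanceAs (AddCommGroup (M.A i × N.A i))
  modA i := inferInstanceAs (Module k (M.A i × N.A i))
  p1 := M.p1.prodMap N.p1
  p2 := M.p2.prodMap N.p2
  f i := (M.f i).prodMap (N.f i)

/-- The direct sum of an arbitrary family of representations. -/
noncomputable def dsum {ι : Type} (F : ι → DRep k m) : DRep k m :=
  letI := Classical.decEq ι
  { T1 := DirectSum ι fun i => (F i).T1
    T2 := DirectSum ι fun i => (F i).T2
    A := fun v => DirectSum ι fun i => (F i).A v
    acgA := fun v => inferInstanceAs (AddCommGroup (DirectSum ι fun i => (F i).A v))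
    modA := fun v => inferInstanceAs (Module k (DirectSum ι fun i => (F i).A v))
    p1 := DirectSum.toModule k ι (DirectSum ι fun i => (F i).T1)
      fun i => (DirectSum.lof k ι (fun j => (F j).T1) i).comp ((F i).p1)
    p2 := DirectSum.toModule k ι (DirectSum ι fun i => (F i).T2)
      fun i => (DirectSum.lof k ι (fun j => (F j).T2) i).comp ((F i).p2)
    f := fun v => DirectSum.toModule k ι (DirectSum ι fun i => (F i).A v.castSucc)
      fun i => (DirectSum.lof k ι (fun j => (F j).A v.castSucc) i).comp ((F i).f v) }

/-- The zero representation predicate. -/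
def IsZero (M : DRep k m) : Prop :=
  (∀ x : M.T1, x = 0) ∧ (∀ x : M.T2, x = 0) ∧ ∀ i, ∀ x : M.A i, x = 0

/-- Indecomposability: nonzero, and any direct sum decomposition has a zero summand. -/
def Indecomposable (M : DRep k m) : Prop :=
  ¬ M.IsZero ∧ ∀ N₁ N₂ : DRep k m, Nonempty (Iso M (N₁.prod N₂)) → N₁.IsZero ∨ N₂.IsZero

/-- Thin: all vertex spaces of dimension at most `1`. -/
def Thin (M : DRep k m) : Prop :=
  Module.rank k M.T1 ≤ 1 ∧ Module.rank k M.T2 ≤ 1 ∧ ∀ i, Module.rank k (M.A i) ≤ 1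

/-- All vertex spaces finite-dimensional. -/
def FinDim (M : DRep k m) : Prop :=
  FiniteDimensional k M.T1 ∧ FiniteDimensional k M.T2 ∧ ∀ i, FiniteDimensional k (M.A i)

/-- Membership in the subcategory `B̌`: the combined map
`(π₁, π₂) : M₃ → M₁ ⊕ M₂` is bijective. -/
def InB (M : DRep k m) : Prop :=
  Function.Bijective (fun x : M.A ⟨0, Nat.succ_pos m⟩ => (M.p1 x, M.p2 x))

end DRep

/-- Dimension profile of the `r`-twin representation along the arm: `2` on the first `r`
arm vertices (quiver vertices `3, ..., r+2`), `1` afterwards. -/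
def cnt (r j : ℕ) : ℕ := if j < r then 2 else 1

/-- The `r`-twin representation of `Q(n)` (`n = m + 3`): `k` at the tips `1` and `2`, `k²`
at the vertices `3, ..., r+2`, `k` at the vertices `r+3, ..., n`; the maps to the tips are
the two canonical projections `k² → k`, the arrow from vertex `r+3` to `r+2` is the diagonal
embedding `k → k²`, all other arm arrows are identities. -/
noncomputable def twinRep (k : Type) [Field k] (m r : ℕ) (hr : 0 < r) : DRep k m where
  T1 := k
  T2 := k
  A i := Fin (cnt r i.val) → k
  acgA i := inferInstanceAs (AddCommGroup (Fin (cnt r i.val) → k))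
  modA i := inferInstanceAs (Module k (Fin (cnt r i.val) → k))
  p1 := LinearMap.proj ⟨0, by unfold cnt; split <;> omega⟩
  p2 := LinearMap.proj
    ⟨1, by
      have h0 : ((⟨0, Nat.succ_pos m⟩ : Fin (m + 1)) : ℕ) = 0 := rfl
      unfold cnt; rw [h0, if_pos hr]; omega⟩
  f i := LinearMap.funLeft k k fun a =>
    ⟨min a.val (cnt r i.succ.val - 1), by
      have h1 : 0 < cnt r i.succ.val := by unfold cnt; split <;> omega
      omega⟩

/-! Every endomorphism of the twin representation is a scalar. On the tips it is multiplication
by some `a` and `b`; the projections `π₁, π₂` force it to act by `diag(a, b)` on the first copy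
of `k²`, and since all arm maps are injective and coordinate-preserving, the same description
propagates along the arm. At the diagonal arrow `k → k²` the second coordinate is hit by the
first one, so `a = b`. A representation whose endomorphisms are all scalars is indecomposable:
the projection onto a summand, transported to the representation, is a scalar, hence `0` or a
nonzero multiple of the identity. -/

namespace LinearEquiv

theorem eq_zero_of_symm_fst_eq_zero {R U V W : Type*} [Semiring R] [AddCommMonoid U]
    [AddCommMonoid V] [AddCommMonoid W] [Module R U] [Module R V] [Module R W] (e : U ≃ₗ[R] V × W)
    (h : ∀ z, e.symm ((e z).1, 0) = 0) (v : V) : v = 0 := by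
  simpa using h (e.symm (v, 0))

theorem eq_zero_of_symm_fst_eq_smul {K U V W : Type*} [DivisionRing K]
    [AddCommGroup U] [AddCommGroup V] [AddCommGroup W] [Module K U] [Module K V] [Module K W]
    (e : U ≃ₗ[K] V × W) {c : K} (hc : c ≠ 0)
    (h : ∀ z, e.symm ((e z).1, 0) = c • z) (w : W) : w = 0 := by
  have h0 := h (e.symm (0, w))
  rw [apply_symm_apply, Prod.mk_zero_zero, map_zero, eq_comm, smul_eq_zero_iff_right hc,
    map_eq_zero_iff, Prod.mk_eq_zero] at h0
  exact h0.2

end LinearEquiv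

theorem LinearMap.apply_eq_apply_one_smul {R : Type*} [CommSemiring R] (f : R →ₗ[R] R) (x : R) :
    f x = f 1 • x := by
  rw [smul_eq_mul, mul_comm, ← smul_eq_mul, ← map_smul, smul_eq_mul, mul_one]

namespace DRep

variable {k : Type} [Field k] {m : ℕ} {M N N₁ N₂ : DRep k m}

def Iso.hom (φ : Iso M N) : Hom M N :=
  ⟨φ.g1, φ.g2, fun i => φ.gA i, φ.comm1, φ.comm2, φ.commf⟩

def Iso.inv (φ : Iso M N) : Hom N M where
  g1 := φ.g1.symm
  g2 := φ.g2.symm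
  gA i := (φ.gA i).symm
  comm1 x := by
    simp only [LinearEquiv.coe_coe]
    rw [LinearEquiv.symm_apply_eq, φ.comm1, LinearEquiv.apply_symm_apply]
  comm2 x := by
    simp only [LinearEquiv.coe_coe]
    rw [LinearEquiv.symm_apply_eq, φ.comm2, LinearEquiv.apply_symm_apply]
  commf i x := by
    simp only [LinearEquiv.coe_coe]
    rw [LinearEquiv.symm_apply_eq, φ.commf, LinearEquiv.apply_symm_apply]

def fstProj (N₁ N₂ : DRep k m) : Hom (N₁.prod N₂) (N₁.prod N₂) where
  g1 := LinearMap.id.prodMap 0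
  g2 := LinearMap.id.prodMap 0
  gA _ := LinearMap.id.prodMap 0
  comm1 _ := Prod.ext rfl (map_zero N₂.p1).symm
  comm2 _ := Prod.ext rfl (map_zero N₂.p2).symm
  commf i _ := Prod.ext rfl (map_zero (N₂.f i)).symm

def Iso.fstEnd (φ : Iso M (N₁.prod N₂)) : Hom M M :=
  φ.inv.comp ((fstProj N₁ N₂).comp φ.hom)

def Hom.IsScalar (ψ : Hom M M) (c : k) : Prop :=
  (∀ x, ψ.g1 x = c • x) ∧ (∀ x, ψ.g2 x = c • x) ∧ ∀ i x, ψ.gA i x = c • x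

/-- The scalar `c` by which `φ.fstEnd` acts fixes the image of `N₁` and kills that of `N₂`:
`c = 0` forces `N₁ = 0`, and `c ≠ 0` forces `N₂ = 0`. -/
theorem Indecomposable.of_forall_isScalar (hM : ¬ M.IsZero)
    (h : ∀ ψ : Hom M M, ∃ c, ψ.IsScalar c) : M.Indecomposable := by
  refine ⟨hM, fun N₁ N₂ ⟨φ⟩ => ?_⟩
  obtain ⟨c, h1, h2, hA⟩ := h φ.fstEnd
  by_cases hc : c = 0
  · subst hc
    simp only [zero_smul] at h1 h2 hA
    exact Or.inl ⟨φ.g1.eq_zero_of_symm_fst_eq_zero h1, φ.g2.eq_zero_of_symm_fst_eq_zero h2,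
      fun i => (φ.gA i).eq_zero_of_symm_fst_eq_zero (hA i)⟩
  · exact Or.inr ⟨φ.g1.eq_zero_of_symm_fst_eq_smul hc h1, φ.g2.eq_zero_of_symm_fst_eq_smul hc h2,
      fun i => (φ.gA i).eq_zero_of_symm_fst_eq_smul hc (hA i)⟩

end DRep

theorem cnt_succ_le (r j : ℕ) : cnt r (j + 1) ≤ cnt r j := by
  unfold cnt; split_ifs <;> omega

section TwinRep

variable {k : Type} [Field k] {m r : ℕ} {hr : 0 < r}

theorem twinRep_not_isZero : ¬ (twinRep k m r hr).IsZero :=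
  fun h => (one_ne_zero : (1 : k) ≠ 0) (h.1 _)

theorem twinRep_f_apply_castLE (i : Fin m) (y : Fin (cnt r (i.val + 1)) → k)
    (t : Fin (cnt r (i.val + 1))) :
    ((twinRep k m r hr).f i y : Fin (cnt r i.val) → k) (Fin.castLE (cnt_succ_le r i) t) = y t := by
  show y _ = y t
  congr 1
  ext
  simp only [Fin.val_castLE]
  omega

theorem twinRep_hom_gA_apply (φ : DRep.Hom (twinRep k m r hr) (twinRep k m r hr))
    (i : Fin (m + 1)) (x : Fin (cnt r i) → k) (t : Fin (cnt r i)) :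
    (φ.gA i x : Fin (cnt r i) → k) t = if (t : ℕ) = 0 then φ.g1 (x t) else φ.g2 (x t) := by
  induction i using Fin.induction with
  | zero =>
    obtain ⟨_ | _ | _, ht⟩ := t
    · exact (φ.comm1 x).symm
    · exact (φ.comm2 x).symm
    · unfold cnt at ht; split at ht <;> omega
  | succ i ih =>
    refine (twinRep_f_apply_castLE i _ t).symm.trans ((congrFun (φ.commf i x).symm _).trans
      ((ih _ _).trans ?_))
    rw [twinRep_f_apply_castLE]
    rfl

theorem twinRep_hom_g2_apply (hrm : r ≤ m) (φ : DRep.Hom (twinRep k m r hr) (twinRep k m r hr))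
    (c : k) : φ.g2 c = φ.g1 c := by
  let i : Fin m := ⟨r - 1, by omega⟩
  have hi : cnt r i = 2 := by simp only [cnt, i]; split_ifs <;> omega
  have hi' : cnt r (i + 1) = 1 := by simp only [cnt, i]; split_ifs <;> omega
  -- Compare both sides of the diagonal arrow `k → k²` at the second coordinate of `k²`.
  let x : Fin (cnt r (i + 1)) → k := fun _ => c
  have hL : (φ.gA i.castSucc ((twinRep k m r hr).f i x) : Fin (cnt r i) → k) ⟨1, by simp [hi]⟩ =
      φ.g2 c :=
    twinRep_hom_gA_apply φ i.castSucc _ _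
  have hR : (φ.gA i.succ x : Fin (cnt r (i + 1)) → k) ⟨0, by simp [hi']⟩ = φ.g1 c :=
    twinRep_hom_gA_apply φ i.succ x _
  have hidx : (⟨min 1 (cnt r (i + 1) - 1), by omega⟩ : Fin (cnt r (i + 1))) = ⟨0, by omega⟩ :=
    Fin.ext (by simp [hi'])
  exact hL.symm.trans ((congrFun (φ.commf i x) _).trans ((congrArg _ hidx).trans hR))

theorem twinRep_hom_isScalar (hrm : r ≤ m) (φ : DRep.Hom (twinRep k m r hr) (twinRep k m r hr)) :
    φ.IsScalar (φ.g1 (1 : k)) := by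
  have hg1 (x : k) := φ.g1.apply_eq_apply_one_smul x
  have hg2 (x : k) := (twinRep_hom_g2_apply hrm φ x).trans (hg1 x)
  refine ⟨hg1, hg2, fun i (x : Fin (cnt r i) → k) => funext fun t => ?_⟩
  refine (twinRep_hom_gA_apply φ i x t).trans ?_
  by_cases ht : (t : ℕ) = 0
  · simp only [ht, ↓reduceIte]
    exact hg1 (x t)
  · simp only [ht, ↓reduceIte]
    exact hg2 (x t)

end TwinRep

theorem stmt14_general (k : Type) [Field k] (n r : ℕ)
    (hr1 : 1 ≤ r) (hr2 : r ≤ n - 3) :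
    (twinRep k (n - 3) r hr1).Indecomposable :=
  DRep.Indecomposable.of_forall_isScalar twinRep_not_isZero
    fun φ => ⟨_, twinRep_hom_isScalar hr2 φ⟩

/-- For `n ≥ 4` and `1 ≤ r ≤ n - 3`, the `r`-twin representation of the
quiver `Q(n)` of type `D_n` is indecomposable. (Here `DRep k (n-3)` is the category of
representations of `Q(n)`.) -/
theorem stmt14 (k : Type) [Field k] (n r : ℕ) (hn : 4 ≤ n)
    (hr1 : 1 ≤ r) (hr2 : r ≤ n - 3) :
    (twinRep k (n - 3) r hr1).Indecomposable :=
  stmt14_general k n r hr1 hr2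
end

section
/- Let Q be a finite quiver with an arm (Q', x), where Q' is a full subquiver of type A_t containing the vertex x, x has at most one neighbor in Q', and there are no arrows between vertices of Q outside Q' and vertices of Q' other than x. Then every representation M of Q decomposes as M = M' ⊕ M'', where M' is conical on (Q', x) (i.e. the restriction of M' to Q' has all maps pointing toward x injective and all other maps of Q' surjective) and the support of M'' is contained in Q' \ {x}. In particular, every indecomposable representation M of Q with M_x ≠ 0 is conical on (Q', x). -/
/-- A representation is conical on the arm `(a, b)` (vertices `a 0, ..., a L`, arrows `b i`
between `a i` and `a (i+1)`, with `x = a 0`): arrows pointing toward `x` act injectively,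
the other arrows of the arm act surjectively. -/
def ConicalOn (k : Type) [Field k] {V E : Type} {s t : E → V} (M : QRep k s t)
    {L : ℕ} (a : Fin (L + 1) → V) (b : Fin L → E) : Prop :=
  ∀ i : Fin L,
    (t (b i) = a i.castSucc → Function.Injective (M.map (b i))) ∧
    (t (b i) = a i.succ → Function.Surjective (M.map (b i)))

/-! Induction on the length of the arm `x = a 0, a 1, ..., a L`. First the arrow `b 0` is made
conical by splitting off a summand supported on the tail `a 1, ..., a L`: at `a 1` one keeps the
image of `b 0` if it points away from `x`, and discards its kernel if it points towards `x`. Any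
subspace at the start of a path is one half of a splitting of the path into two complementary
subrepresentations, and since only `b 0` joins the tail to the rest of the quiver, this splits `M`
itself. The induction hypothesis for the arm rooted at `a 1` then makes the remaining arrows
conical, splitting off only summands that vanish at `a 0` and `a 1`, so `b 0` stays conical. -/

open Function

namespace Submodule

variable {R P Q : Type*} [Ring R] [AddCommGroup P] [Module R P] [AddCommGroup Q] [Module R Q]
  [ComplementedLattice (Submodule R P)]

theorem exists_isCompl_map_le_of_codisjoint_map (f : P →ₗ[R] Q) {X : Submodule R P}
    {Y' : Submodule R Q} (h : Codisjoint (X.map f) Y') :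
    ∃ Y : Submodule R P, IsCompl X Y ∧ Y.map f ≤ Y' := by
  have hcod : Codisjoint (Y'.comap f) X := by
    rw [codisjoint_iff, sup_comm,
      ← comap_map_sup_of_comap_le (p := X ⊔ Y'.comap f) le_sup_right, eq_top_iff]
    refine le_trans ?_ (comap_mono (sup_le_sup_right (map_mono le_sup_left) Y'))
    rw [h.eq_top, comap_top]
  obtain ⟨Y, hY, hXY⟩ := hcod.exists_isCompl
  exact ⟨Y, hXY.symm, map_le_iff_le_comap.2 hY⟩

theorem exists_isCompl_map_le_of_disjoint_comap (g : Q →ₗ[R] P) {X : Submodule R P}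
    {Y' : Submodule R Q} (h : Disjoint (X.comap g) Y') :
    ∃ Y : Submodule R P, IsCompl X Y ∧ Y'.map g ≤ Y := by
  have hdis : Disjoint (Y'.map g) X := by
    rw [disjoint_def]
    rintro _ ⟨y, hy, rfl⟩ hyX
    rw [disjoint_def.1 h y hyX hy, map_zero]
  obtain ⟨Y, hY, hXY⟩ := hdis.exists_isCompl
  exact ⟨Y, hXY.symm, hY⟩

end Submodule

namespace QRep

variable {k : Type} [Field k] {V E : Type} {s t : E → V}

section Iso

variable {M N P : QRep k s t}

def Iso.trans (φ : Iso M N) (ψ : Iso N P) : Iso M P where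
  app v := (φ.app v).trans (ψ.app v)
  comm e x := by simp [φ.comm, ψ.comm]

def Iso.prodLeft (φ : Iso M N) (P : QRep k s t) : Iso (M.prod P) (N.prod P) where
  app v := (φ.app v).prodCongr (LinearEquiv.refl k _)
  comm e x := Prod.ext (φ.comm e x.1) rfl

def prodAssoc (M N P : QRep k s t) : Iso ((M.prod N).prod P) (M.prod (N.prod P)) where
  app _ := LinearEquiv.prodAssoc k _ _ _
  comm _ _ := rfl

theorem Iso.injective_map_iff (φ : Iso M N) (e : E) :
    Injective (M.map e) ↔ Injective (N.map e) := by
  have h : N.map e ∘ φ.app (s e) = φ.app (t e) ∘ M.map e := funext fun x => (φ.comm e x).symm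
  rw [← EquivLike.comp_injective (M.map e) (φ.app (t e)), ← h, EquivLike.injective_comp]

theorem Iso.surjective_map_iff (φ : Iso M N) (e : E) :
    Surjective (M.map e) ↔ Surjective (N.map e) := by
  have h : N.map e ∘ φ.app (s e) = φ.app (t e) ∘ M.map e := funext fun x => (φ.comm e x).symm
  rw [← EquivLike.comp_surjective (M.map e) (φ.app (t e)), ← h, EquivLike.surjective_comp]

end Iso

theorem prod_map_injective_iff (M N : QRep k s t) (e : E) :
    Injective ((M.prod N).map e) ↔ Injective (M.map e) ∧ Injective (N.map e) :=
  Prod.map_injective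

theorem prod_map_surjective_iff (M N : QRep k s t) (e : E) :
    Surjective ((M.prod N).map e) ↔ Surjective (M.map e) ∧ Surjective (N.map e) :=
  Prod.map_surjective

def MapsTo (M : QRep k s t) (F : ∀ v, Submodule k (M.space v)) (e : E) : Prop :=
  (F (s e)).map (M.map e) ≤ F (t e)

theorem MapsTo.mem {M : QRep k s t} {F : ∀ v, Submodule k (M.space v)} {e : E}
    (h : M.MapsTo F e) {x : M.space (s e)} (hx : x ∈ F (s e)) : M.map e x ∈ F (t e) :=
  h (Submodule.mem_map_of_mem hx)

theorem mapsTo_top (M : QRep k s t) (e : E) : M.MapsTo ⊤ e := le_top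

theorem mapsTo_bot (M : QRep k s t) (e : E) : M.MapsTo ⊥ e := by
  simp [MapsTo]

theorem mapsTo_update_of_ne [DecidableEq V] (M : QRep k s t) {F : ∀ v, Submodule k (M.space v)}
    {e : E} {v : V} (G : Submodule k (M.space v)) (hs : s e ≠ v) (ht : t e ≠ v) :
    M.MapsTo (update F v G) e ↔ M.MapsTo F e := by
  rw [MapsTo, MapsTo, update_of_ne hs, update_of_ne ht]

def subRep (M : QRep k s t) (F : ∀ v, Submodule k (M.space v)) (hF : ∀ e, M.MapsTo F e) :
    QRep k s t where
  space v := F v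
  map e := (M.map e).restrict fun _ => (hF e).mem

theorem subRep_map_injective_iff (M : QRep k s t) {F : ∀ v, Submodule k (M.space v)}
    (hF : ∀ e, M.MapsTo F e) (e : E) :
    Injective ((M.subRep F hF).map e) ↔ Disjoint (F (s e)) (LinearMap.ker (M.map e)) :=
  LinearMap.injective_restrict_iff fun _ => (hF e).mem

theorem subRep_map_surjective_iff (M : QRep k s t) {F : ∀ v, Submodule k (M.space v)}
    (hF : ∀ e, M.MapsTo F e) (e : E) :
    Surjective ((M.subRep F hF).map e) ↔ F (t e) ≤ (F (s e)).map (M.map e) := by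
  rw [← LinearMap.range_eq_top, subRep, LinearMap.range_restrict,
    Submodule.comap_subtype_eq_top]

theorem subRep_piecewise_bot_eq_zero (M : QRep k s t) {T : Set V} [∀ v, Decidable (v ∈ T)]
    {Y : ∀ v, Submodule k (M.space v)} (hY : ∀ e, M.MapsTo (T.piecewise Y ⊥) e) {v : V}
    (hv : v ∉ T) (y : (M.subRep (T.piecewise Y ⊥) hY).space v) : y = 0 := by
  obtain ⟨y, hy⟩ := y
  rw [Set.piecewise_eq_of_notMem _ _ _ hv, Pi.bot_apply, Submodule.mem_bot] at hy
  exact Subtype.ext hy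

noncomputable def isoProdSubRep (M : QRep k s t) {C W : ∀ v, Submodule k (M.space v)}
    (hC : ∀ e, M.MapsTo C e) (hW : ∀ e, M.MapsTo W e) (hCW : ∀ v, IsCompl (C v) (W v)) :
    Iso M ((M.subRep C hC).prod (M.subRep W hW)) where
  app v := (Submodule.prodEquivOfIsCompl (C v) (W v) (hCW v)).symm
  comm e x := by
    set p := (Submodule.prodEquivOfIsCompl _ _ (hCW (s e))).symm x
    refine (Submodule.prodEquivOfIsCompl _ _ (hCW (t e))).injective ?_
    refine (LinearEquiv.apply_symm_apply _ _).trans ?_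
    calc M.map e x = M.map e (Submodule.prodEquivOfIsCompl _ _ (hCW (s e)) p) := by
          rw [LinearEquiv.apply_symm_apply]
      _ = M.map e p.1 + M.map e p.2 := by
          rw [Submodule.coe_prodEquivOfIsCompl', map_add]
      _ = _ := rfl

structure SplitsAlong (M : QRep k s t) {L : ℕ} (a : Fin (L + 1) → V) (b : Fin L → E)
    (X Y : ∀ v, Submodule k (M.space v)) : Prop where
  isCompl : ∀ i, IsCompl (X (a i)) (Y (a i))
  mapsTo_left : ∀ i, M.MapsTo X (b i)
  mapsTo_right : ∀ i, M.MapsTo Y (b i)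

theorem SplitsAlong.symm {M : QRep k s t} {L : ℕ} {a : Fin (L + 1) → V} {b : Fin L → E}
    {X Y : ∀ v, Submodule k (M.space v)} (h : M.SplitsAlong a b X Y) : M.SplitsAlong a b Y X :=
  ⟨fun i => (h.isCompl i).symm, h.mapsTo_right, h.mapsTo_left⟩

end QRep

section Arm

open QRep

variable {k : Type} [Field k] {V E : Type} {s t : E → V} {L : ℕ}

structure IsPath (s t : E → V) (a : Fin (L + 1) → V) (b : Fin L → E) : Prop where
  injective : Injective a
  adj : ∀ i, (s (b i) = a i.castSucc ∧ t (b i) = a i.succ) ∨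
    (s (b i) = a i.succ ∧ t (b i) = a i.castSucc)

/-- An arm `(Q', x)` with `x = a 0`: fullness of `Q'` and its being attached to the rest of
the quiver only at `x` together amount to this condition. -/
structure IsArm (s t : E → V) (a : Fin (L + 1) → V) (b : Fin L → E) : Prop
    extends IsPath s t a b where
  eq_of_touch : ∀ e i, i ≠ 0 → (s e = a i ∨ t e = a i) → ∃ j, e = b j

theorem conicalOn_of_tail {M : QRep k s t} {a : Fin (L + 2) → V} {b : Fin (L + 1) → E}
    (hinj : t (b 0) = a 0 → Injective (M.map (b 0)))
    (hsurj : t (b 0) = a 1 → Surjective (M.map (b 0)))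
    (h : ConicalOn k M (Fin.tail a) (Fin.tail b)) : ConicalOn k M a b := by
  refine Fin.cases ?_ fun j => ?_
  · simpa only [Fin.castSucc_zero, Fin.succ_zero_eq_one] using And.intro hinj hsurj
  · have hj := h j
    rw [Fin.tail, Fin.tail, Fin.succ_castSucc] at hj
    exact hj

theorem ConicalOn.of_iso_prod {M M' M'' : QRep k s t} {a : Fin (L + 1) → V} {b : Fin L → E}
    (φ : QRep.Iso M (M'.prod M'')) (h : ConicalOn k M' a b) (h'' : M''.IsZero) :
    ConicalOn k M a b := by
  have : ∀ v, Subsingleton (M''.space v) := fun v =>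
    ⟨fun x y => (h'' v x).trans (h'' v y).symm⟩
  refine fun i => ⟨fun ht => ?_, fun ht => ?_⟩
  · rw [φ.injective_map_iff, prod_map_injective_iff]
    exact ⟨(h i).1 ht, injective_of_subsingleton _⟩
  · rw [φ.surjective_map_iff, prod_map_surjective_iff]
    exact ⟨(h i).2 ht, surjective_to_subsingleton _⟩

namespace IsPath

section Tail

variable {a : Fin (L + 2) → V} {b : Fin (L + 1) → E}

theorem tail (h : IsPath s t a b) : IsPath s t (Fin.tail a) (Fin.tail b) where
  injective := h.injective.comp (Fin.succ_injective _)
  adj i := by simpa only [Fin.tail, Fin.succ_castSucc] using h.adj i.succ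

theorem zero_notMem_range_tail (h : IsPath s t a b) : a 0 ∉ Set.range (Fin.tail a) := by
  rintro ⟨i, hi⟩
  exact Fin.succ_ne_zero i (h.injective hi)

theorem src_mem_range_tail (h : IsPath s t a b) (j : Fin L) :
    s (b j.succ) ∈ Set.range (Fin.tail a) := by
  rcases h.adj j.succ with ⟨hs, -⟩ | ⟨hs, -⟩
  · exact ⟨j.castSucc, by rw [hs, Fin.tail, Fin.succ_castSucc]⟩
  · exact ⟨j.succ, hs.symm⟩

theorem tgt_mem_range_tail (h : IsPath s t a b) (j : Fin L) :
    t (b j.succ) ∈ Set.range (Fin.tail a) := by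
  rcases h.adj j.succ with ⟨-, ht⟩ | ⟨-, ht⟩
  · exact ⟨j.succ, ht.symm⟩
  · exact ⟨j.castSucc, by rw [ht, Fin.tail, Fin.succ_castSucc]⟩

theorem eq_zero_or_eq_one_of_touch_first (h : IsPath s t a b) {j : Fin (L + 2)}
    (he : s (b 0) = a j ∨ t (b 0) = a j) : j = 0 ∨ j = 1 := by
  rcases h.adj 0 with ⟨hs, ht⟩ | ⟨hs, ht⟩ <;> rcases he with he | he <;>
    simp_all [h.injective.eq_iff]

theorem splitsAlong_update [DecidableEq V] {M : QRep k s t}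
    (h : IsPath s t a b) {v : V} (hv : a 0 = v) {X Y : ∀ v, Submodule k (M.space v)}
    (hXY : M.SplitsAlong (Fin.tail a) (Fin.tail b) X Y) {S T : Submodule k (M.space v)}
    (hST : IsCompl S T) (hX : M.MapsTo (update X v S) (b 0))
    (hY : M.MapsTo (update Y v T) (b 0)) :
    M.SplitsAlong a b (update X v S) (update Y v T) := by
  subst hv
  have hs (j : Fin L) : s (b j.succ) ≠ a 0 := fun h' =>
    h.zero_notMem_range_tail (h' ▸ h.src_mem_range_tail j)
  have ht (j : Fin L) : t (b j.succ) ≠ a 0 := fun h' =>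
    h.zero_notMem_range_tail (h' ▸ h.tgt_mem_range_tail j)
  refine ⟨Fin.cases ?_ fun i => ?_, Fin.cases hX fun j => ?_, Fin.cases hY fun j => ?_⟩
  · simpa only [update_self] using hST
  · have hi : a i.succ ≠ a 0 := h.injective.ne (Fin.succ_ne_zero i)
    rw [update_of_ne hi, update_of_ne hi]
    exact hXY.isCompl i
  · exact (M.mapsTo_update_of_ne S (hs j) (ht j)).2 (hXY.mapsTo_left j)
  · exact (M.mapsTo_update_of_ne T (hs j) (ht j)).2 (hXY.mapsTo_right j)

end Tail

/-- Push `S` along the path (images along arrows pointing away from `a 0`, preimages along the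
others), then choose the complements from the far end back. -/
theorem exists_splitsAlong {a : Fin (L + 1) → V} {b : Fin L → E}
    (h : IsPath s t a b) (M : QRep k s t) {v : V} (hv : a 0 = v) (S : Submodule k (M.space v)) :
    ∃ X Y : ∀ v, Submodule k (M.space v), X v = S ∧ M.SplitsAlong a b X Y := by
  classical
  induction L generalizing v with
  | zero =>
    subst hv
    obtain ⟨T, hST⟩ := S.exists_isCompl
    refine ⟨update ⊤ (a 0) S, update ⊥ (a 0) T, update_self ..,
      ⟨fun i => ?_, fun i => i.elim0, fun i => i.elim0⟩⟩
    rw [Fin.fin_one_eq_zero i, update_self, update_self]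
    exact hST
  | succ L ih =>
    rcases h.adj 0 with ⟨hs, ht⟩ | ⟨hs, ht⟩
    · obtain rfl : s (b 0) = v := hs.trans hv
      obtain ⟨X, Y, hX, hXY⟩ := ih h.tail ht.symm (S.map (M.map (b 0)))
      have hne : t (b 0) ≠ s (b 0) := by
        rw [ht, ← hv]; exact h.injective.ne (Fin.succ_ne_zero 0)
      have hc : IsCompl (X (t (b 0))) (Y (t (b 0))) := ht ▸ hXY.isCompl 0
      rw [hX] at hc
      obtain ⟨T, hST, hT⟩ := Submodule.exists_isCompl_map_le_of_codisjoint_map _ hc.codisjoint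
      refine ⟨_, _, update_self .., h.splitsAlong_update hv hXY hST ?_ ?_⟩
      · rw [MapsTo, update_self, update_of_ne hne, hX]
      · rwa [MapsTo, update_self, update_of_ne hne]
    · obtain rfl : t (b 0) = v := ht.trans hv
      obtain ⟨X, Y, hX, hXY⟩ := ih h.tail hs.symm (S.comap (M.map (b 0)))
      have hne : s (b 0) ≠ t (b 0) := by
        rw [hs, ← hv]; exact h.injective.ne (Fin.succ_ne_zero 0)
      have hc : IsCompl (X (s (b 0))) (Y (s (b 0))) := hs ▸ hXY.isCompl 0
      rw [hX] at hc
      obtain ⟨T, hST, hT⟩ := Submodule.exists_isCompl_map_le_of_disjoint_comap _ hc.disjoint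
      refine ⟨_, _, update_self .., h.splitsAlong_update hv hXY hST ?_ ?_⟩
      · rw [MapsTo, update_self, update_of_ne hne, hX]
        exact Submodule.map_comap_le _ _
      · rwa [MapsTo, update_self, update_of_ne hne]

end IsPath

namespace IsArm

section Tail

variable {a : Fin (L + 2) → V} {b : Fin (L + 1) → E}

theorem tail (h : IsArm s t a b) :
    IsArm s t (Fin.tail a) (Fin.tail b) where
  toIsPath := h.toIsPath.tail
  eq_of_touch e i hi he := by
    obtain ⟨j, rfl⟩ := h.eq_of_touch e i.succ (Fin.succ_ne_zero i) he
    cases j using Fin.cases with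
    | succ j => exact ⟨j, rfl⟩
    | zero =>
      rcases h.eq_zero_or_eq_one_of_touch_first he with h0 | h1
      · exact absurd h0 (Fin.succ_ne_zero i)
      · exact (hi (Fin.succ_injective _ (h1.trans Fin.succ_zero_eq_one.symm))).elim

theorem arrow_cases (h : IsArm s t a b) (e : E) :
    e = b 0 ∨ (∃ j, e = b (Fin.succ j)) ∨
      (s e ∉ Set.range (Fin.tail a) ∧ t e ∉ Set.range (Fin.tail a)) := by
  by_cases he : s e ∈ Set.range (Fin.tail a) ∨ t e ∈ Set.range (Fin.tail a)
  · obtain ⟨i, hi⟩ : ∃ i, s e = a (Fin.succ i) ∨ t e = a (Fin.succ i) := by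
      rcases he with ⟨i, hi⟩ | ⟨i, hi⟩
      exacts [⟨i, .inl hi.symm⟩, ⟨i, .inr hi.symm⟩]
    obtain ⟨j, rfl⟩ := h.eq_of_touch e _ (Fin.succ_ne_zero i) hi
    cases j using Fin.cases with
    | zero => exact .inl rfl
    | succ j => exact .inr (.inl ⟨j, rfl⟩)
  · exact .inr (.inr (not_or.1 he))

theorem mapsTo_piecewise {M : QRep k s t} [∀ v, Decidable (v ∈ Set.range (Fin.tail a))]
    (h : IsArm s t a b) {X D : ∀ v, Submodule k (M.space v)}
    (hX : ∀ j, M.MapsTo X (Fin.tail b j)) (hD : ∀ e, M.MapsTo D e)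
    (h0 : M.MapsTo ((Set.range (Fin.tail a)).piecewise X D) (b 0)) (e : E) :
    M.MapsTo ((Set.range (Fin.tail a)).piecewise X D) e := by
  rcases h.arrow_cases e with rfl | ⟨j, rfl⟩ | ⟨hs, ht⟩
  · exact h0
  · rw [MapsTo, Set.piecewise_eq_of_mem _ _ _ (h.src_mem_range_tail j),
      Set.piecewise_eq_of_mem _ _ _ (h.tgt_mem_range_tail j)]
    exact hX j
  · rw [MapsTo, Set.piecewise_eq_of_notMem _ _ _ hs, Set.piecewise_eq_of_notMem _ _ _ ht]
    exact hD e

theorem exists_iso_prod_of_splitsAlong {M : QRep k s t}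
    [∀ v, Decidable (v ∈ Set.range (Fin.tail a))] (h : IsArm s t a b)
    {X Y : ∀ v, Submodule k (M.space v)}
    (hXY : M.SplitsAlong (Fin.tail a) (Fin.tail b) X Y)
    (hX : M.MapsTo ((Set.range (Fin.tail a)).piecewise X ⊤) (b 0))
    (hY : M.MapsTo ((Set.range (Fin.tail a)).piecewise Y ⊥) (b 0))
    (hinj : t (b 0) = a 0 →
      Disjoint ((Set.range (Fin.tail a)).piecewise X ⊤ (s (b 0))) (LinearMap.ker (M.map (b 0))))
    (hsurj : t (b 0) = a 1 → (Set.range (Fin.tail a)).piecewise X ⊤ (t (b 0)) ≤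
      ((Set.range (Fin.tail a)).piecewise X ⊤ (s (b 0))).map (M.map (b 0))) :
    ∃ M₁ M₂ : QRep k s t, Nonempty (Iso M (M₁.prod M₂)) ∧
      (t (b 0) = a 0 → Injective (M₁.map (b 0))) ∧
      (t (b 0) = a 1 → Surjective (M₁.map (b 0))) ∧
      ∀ v, (∃ y : M₂.space v, y ≠ 0) → v ∈ Set.range (Fin.tail a) := by
  have hC := h.mapsTo_piecewise hXY.mapsTo_left M.mapsTo_top hX
  have hW := h.mapsTo_piecewise hXY.mapsTo_right M.mapsTo_bot hY
  have hCW v : IsCompl ((Set.range (Fin.tail a)).piecewise X ⊤ v)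
      ((Set.range (Fin.tail a)).piecewise Y ⊥ v) := by
    by_cases hv : v ∈ Set.range (Fin.tail a)
    · obtain ⟨i, rfl⟩ := hv
      simpa only [Set.piecewise_eq_of_mem _ _ _ (Set.mem_range_self i)] using hXY.isCompl i
    · rw [Set.piecewise_eq_of_notMem _ _ _ hv, Set.piecewise_eq_of_notMem _ _ _ hv]
      exact isCompl_top_bot
  refine ⟨_, _, ⟨M.isoProdSubRep hC hW hCW⟩,
    fun ht => (M.subRep_map_injective_iff hC _).2 (hinj ht),
    fun ht => (M.subRep_map_surjective_iff hC _).2 (hsurj ht), fun v ⟨y, hy⟩ => ?_⟩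
  by_contra hv
  exact hy (M.subRep_piecewise_bot_eq_zero hW hv y)

theorem exists_iso_prod_conicalAt_zero (h : IsArm s t a b) (M : QRep k s t) :
    ∃ M₁ M₂ : QRep k s t, Nonempty (Iso M (M₁.prod M₂)) ∧
      (t (b 0) = a 0 → Injective (M₁.map (b 0))) ∧
      (t (b 0) = a 1 → Surjective (M₁.map (b 0))) ∧
      ∀ v, (∃ y : M₂.space v, y ≠ 0) → v ∈ Set.range (Fin.tail a) := by
  classical
  have ha01 : a 1 ≠ a 0 := h.injective.ne Fin.zero_lt_one.ne'
  rcases h.adj 0 with ⟨hs, ht⟩ | ⟨hs, ht⟩ <;>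
    simp only [Fin.castSucc_zero, Fin.succ_zero_eq_one] at hs ht
  · obtain ⟨X, Y, hX, hXY⟩ :=
      h.tail.exists_splitsAlong M ht.symm (LinearMap.range (M.map (b 0)))
    have hsT : s (b 0) ∉ Set.range (Fin.tail a) := hs ▸ h.zero_notMem_range_tail
    have htT : t (b 0) ∈ Set.range (Fin.tail a) := ⟨0, ht.symm⟩
    refine h.exists_iso_prod_of_splitsAlong hXY ?_ ?_ (fun ht' => absurd (ht.symm.trans ht') ha01)
      fun _ => ?_ <;>
      simp only [MapsTo, Set.piecewise_eq_of_mem _ _ _ htT, Set.piecewise_eq_of_notMem _ _ _ hsT,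
        hX]
    · exact LinearMap.map_le_range
    · rw [Pi.bot_apply, Submodule.map_bot]
      exact bot_le
    · rw [Pi.top_apply, Submodule.map_top]
  · obtain ⟨X, Y, hX, hXY⟩ :=
      h.tail.exists_splitsAlong M hs.symm (LinearMap.ker (M.map (b 0)))
    have htT : t (b 0) ∉ Set.range (Fin.tail a) := ht ▸ h.zero_notMem_range_tail
    have hsT : s (b 0) ∈ Set.range (Fin.tail a) := ⟨0, hs.symm⟩
    have hc : IsCompl (X (s (b 0))) (Y (s (b 0))) := hs ▸ hXY.isCompl 0
    refine h.exists_iso_prod_of_splitsAlong hXY.symm ?_ ?_ (fun _ => ?_)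
      (fun ht' => absurd (ht.symm.trans ht') ha01.symm) <;>
      simp only [MapsTo, Set.piecewise_eq_of_mem _ _ _ hsT, Set.piecewise_eq_of_notMem _ _ _ htT,
        hX]
    · exact le_top
    · rw [Submodule.map_le_iff_le_comap, Pi.bot_apply, Submodule.comap_bot]
    · rw [← hX]; exact hc.disjoint.symm

end Tail

theorem exists_iso_prod_conicalOn {a : Fin (L + 1) → V} {b : Fin L → E}
    (h : IsArm s t a b) (M : QRep k s t) :
    ∃ M' M'' : QRep k s t, Nonempty (Iso M (M'.prod M'')) ∧ ConicalOn k M' a b ∧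
      ∀ v, (∃ y : M''.space v, y ≠ 0) → ∃ i, i ≠ 0 ∧ v = a i := by
  induction L generalizing M with
  | zero =>
    refine ⟨_, _, ⟨M.isoProdSubRep M.mapsTo_top M.mapsTo_bot fun _ => isCompl_top_bot⟩,
      fun i => i.elim0,
      fun v ⟨⟨y, hy⟩, hy0⟩ => absurd (Subtype.ext ((Submodule.mem_bot k).1 hy)) hy0⟩
  | succ L ih =>
    obtain ⟨M₁, M₂, ⟨φ⟩, hinj, hsurj, hM₂⟩ := h.exists_iso_prod_conicalAt_zero M
    obtain ⟨N, P, ⟨ψ⟩, hN, hP⟩ := ih h.tail M₁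
    refine ⟨N, P.prod M₂, ⟨φ.trans ((ψ.prodLeft M₂).trans (prodAssoc N P M₂))⟩,
      conicalOn_of_tail (fun ht => ?_) (fun ht => ?_) hN, ?_⟩
    · exact ((prod_map_injective_iff N P _).1 ((ψ.injective_map_iff _).1 (hinj ht))).1
    · exact ((prod_map_surjective_iff N P _).1 ((ψ.surjective_map_iff _).1 (hsurj ht))).1
    rintro v ⟨⟨y, y₂⟩, hy⟩
    by_cases hy₁ : y = 0
    · obtain ⟨i, rfl⟩ := hM₂ v ⟨y₂, fun h₂ => hy (Prod.ext hy₁ h₂)⟩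
      exact ⟨i.succ, Fin.succ_ne_zero i, rfl⟩
    · obtain ⟨i, -, rfl⟩ := hP v ⟨y, hy₁⟩
      exact ⟨i.succ, Fin.succ_ne_zero i, rfl⟩

end IsArm

end Arm

/-- Let `Q` have an arm `(Q', x)`: `Q'` is a full subquiver of type `A`
with vertices `a 0 = x, a 1, ..., a L` and arrows `b i` between consecutive vertices, and
the only connection of `Q'` with the rest of `Q` is through `x`. Then every representation
`M` decomposes as `M ≅ M' ⊕ M''` with `M'` conical on `(Q', x)` and the support of `M''`
contained in `Q' \ {x}`. In particular, every indecomposable `M` with `M_x ≠ 0` is conical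
on `(Q', x)`. -/
theorem stmt16 (k : Type) [Field k] {V E : Type} (s t : E → V) (L : ℕ)
    (a : Fin (L + 1) → V) (b : Fin L → E)
    (ha : Function.Injective a)
    (hb : ∀ i : Fin L,
      (s (b i) = a i.castSucc ∧ t (b i) = a i.succ) ∨
      (s (b i) = a i.succ ∧ t (b i) = a i.castSucc))
    (hfull : ∀ e : E, s e ∈ Set.range a → t e ∈ Set.range a → ∃ i, e = b i)
    (harm : ∀ e : E, ∀ i : Fin (L + 1), i ≠ 0 → (s e = a i ∨ t e = a i) →
      s e ∈ Set.range a ∧ t e ∈ Set.range a)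
    (M : QRep k s t) :
    (∃ M' M'' : QRep k s t,
      Nonempty (QRep.Iso M (M'.prod M'')) ∧
      ConicalOn k M' a b ∧
      (∀ v : V, (∃ y : M''.space v, y ≠ 0) → ∃ i : Fin (L + 1), i ≠ 0 ∧ v = a i)) ∧
    (M.Indecomposable → (∃ x : M.space (a 0), x ≠ 0) → ConicalOn k M a b) := by
  have h : IsArm s t a b :=
    ⟨⟨ha, hb⟩, fun e i hi he => hfull e (harm e i hi he).1 (harm e i hi he).2⟩
  obtain ⟨M', M'', ⟨φ⟩, hM', hM''⟩ := h.exists_iso_prod_conicalOn M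
  refine ⟨⟨M', M'', ⟨φ⟩, hM', hM''⟩, fun hM ⟨x, hx⟩ => ?_⟩
  rcases hM.2 M' M'' ⟨φ⟩ with h' | h''
  · have h₂ : (φ.app (a 0) x).2 = 0 := by
      by_contra h₂
      obtain ⟨i, hi, hai⟩ := hM'' (a 0) ⟨_, h₂⟩
      exact hi (ha hai).symm
    exact absurd ((φ.app (a 0)).map_eq_zero_iff.1 (Prod.ext (h' _ _) h₂)) hx
  · exact hM'.of_iso_prod φ h''
end
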